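/- arXiv:1007.2337 — 4 statements merged into one kernel-verified Lean document; each statement's English description precedes it below -/
import Mathlib

section
/- Let n ≡ 3 (mod 4) and let H = {e_0, ē_0} ∪ {e_i : 1 ≤ i ≤ n} ∪ {ē_i : 1 ≤ i ≤ n} ⊆ (ℤ/2ℤ)^n, where e_0 = (0,…,0), ē_0 = (1,…,1), e_i is the i-th standard basis vector and ē_i = ē_0 + e_i. Then H has cardinality 2n+2 and (H, (ℤ/2ℤ)^n) is a multiplicative pair with respect to the octonion-type twisting function f_O. -/
/-- The real sign `(−1)^ε` of an element `ε ∈ ℤ/2ℤ`. -/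
def sgn (ε : ZMod 2) : ℝ := if ε = 0 then 1 else -1

/-- The octonion-type twisting function on `(ℤ/2ℤ)^n`. -/
def fO (n : ℕ) (x y : Fin n → ZMod 2) : ZMod 2 :=
  (∑ k : Fin n, ∑ j ∈ Finset.Iio k, ∑ i ∈ Finset.Iio j,
      (x i * x j * y k + x i * y j * x k + y i * x j * x k)) +
  ∑ j : Fin n, ∑ i ∈ Finset.Iic j, x i * y j

/-- `(A, B)` is a multiplicative pair with respect to the twisting function `f`. -/
def IsMultiplicativePair (n : ℕ)
    (f : (Fin n → ZMod 2) → (Fin n → ZMod 2) → ZMod 2)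
    (A B : Finset (Fin n → ZMod 2)) : Prop :=
  ∀ (a b : (Fin n → ZMod 2) → ℝ),
    (∑ x ∈ A, a x ^ 2) * (∑ y ∈ B, b y ^ 2) =
      ∑ z : Fin n → ZMod 2,
        (∑ x ∈ A, ∑ y ∈ B, if x + y = z then sgn (f x y) * a x * b y else 0) ^ 2

/-- `e_i`: the `i`-th standard basis vector of `(ℤ/2ℤ)^n`. -/
def eVec (n : ℕ) (i : Fin n) : Fin n → ZMod 2 := fun j => if j = i then 1 else 0

/-- `ē_i = (1,…,1) + e_i`: the vector with `0` in position `i` and `1` elsewhere. -/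
def eBarVec (n : ℕ) (i : Fin n) : Fin n → ZMod 2 := fun j => if j = i then 0 else 1



open Finset

namespace HurAux

variable {n : ℕ}

def sv (n : ℕ) (x : Fin n → ZMod 2) : ZMod 2 := ∑ i, x i
def sg2 (n : ℕ) (x : Fin n → ZMod 2) : ZMod 2 := ∑ j : Fin n, ∑ i ∈ Finset.Iio j, x i * x j
def ip (n : ℕ) (x y : Fin n → ZMod 2) : ZMod 2 := ∑ i, x i * y i
def bf (n : ℕ) (x y : Fin n → ZMod 2) : ZMod 2 := ∑ j : Fin n, ∑ i ∈ Finset.Iic j, x i * y j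

lemma z2_mul_self : ∀ a : ZMod 2, a * a = a := by decide
lemma z2_add_self : ∀ a : ZMod 2, a + a = 0 := by decide

lemma sum_ite_univ {M : Type*} [AddCommMonoid M] (s : Finset (Fin n)) (g : Fin n → M) :
    ∑ j ∈ s, g j = ∑ j : Fin n, if j ∈ s then g j else 0 := by
  rw [Finset.sum_ite_mem, Finset.univ_inter]

lemma sum_Iio_comm {M : Type*} [AddCommMonoid M] (g : Fin n → Fin n → M) :
    ∑ k : Fin n, ∑ j ∈ Finset.Iio k, g j k = ∑ j : Fin n, ∑ k ∈ Finset.Ioi j, g j k := by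
  have h1 : ∀ k : Fin n, (∑ j ∈ Finset.Iio k, g j k) = ∑ j : Fin n, if j < k then g j k else 0 :=
    fun k => by rw [sum_ite_univ]; simp
  have h2 : ∀ j : Fin n, (∑ k ∈ Finset.Ioi j, g j k) = ∑ k : Fin n, if j < k then g j k else 0 :=
    fun j => by rw [sum_ite_univ]; simp
  simp_rw [h1, h2]
  exact Finset.sum_comm

lemma sum_Iio_Iio_comm {M : Type*} [AddCommMonoid M] (K : Fin n) (g : Fin n → Fin n → M) :
    ∑ j ∈ Finset.Iio K, ∑ i ∈ Finset.Iio j, g i j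
      = ∑ i ∈ Finset.Iio K, ∑ j ∈ Finset.Ioo i K, g i j := by
  have L : (∑ j ∈ Finset.Iio K, ∑ i ∈ Finset.Iio j, g i j)
      = ∑ j : Fin n, ∑ i : Fin n, if i < j ∧ j < K then g i j else 0 := by
    rw [sum_ite_univ]
    refine Finset.sum_congr rfl fun j _ => ?_
    by_cases h : j < K
    · simp only [Finset.mem_Iio, h, if_true]
      rw [sum_ite_univ]
      exact Finset.sum_congr rfl fun i _ => by by_cases hij : i < j <;> simp [hij, h]
    · simp [h]
  have R : (∑ i ∈ Finset.Iio K, ∑ j ∈ Finset.Ioo i K, g i j)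
      = ∑ i : Fin n, ∑ j : Fin n, if i < j ∧ j < K then g i j else 0 := by
    rw [sum_ite_univ]
    refine Finset.sum_congr rfl fun i _ => ?_
    by_cases h : i < K
    · simp only [Finset.mem_Iio, h, if_true]
      rw [sum_ite_univ]
      refine Finset.sum_congr rfl fun j _ => ?_
      by_cases hij : i < j ∧ j < K <;> simp [Finset.mem_Ioo, hij]
    · simp only [Finset.mem_Iio, h, if_false]
      refine (Finset.sum_eq_zero fun j _ => ?_).symm
      rw [if_neg]
      exact fun hc => h (hc.1.trans hc.2)
  rw [L, R, Finset.sum_comm]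

lemma sum_Iio_self_Ioi (g : Fin n → ZMod 2) (p : Fin n) :
    (∑ i ∈ Finset.Iio p, g i) + g p + ∑ i ∈ Finset.Ioi p, g i = ∑ i, g i := by
  have hp : g p = ∑ i : Fin n, if i = p then g i else 0 := by
    rw [Finset.sum_ite_eq' Finset.univ p g]; simp
  have e1 : (∑ i ∈ Finset.Iio p, g i) = ∑ i : Fin n, if i < p then g i else 0 := by
    rw [sum_ite_univ]; simp
  have e2 : (∑ i ∈ Finset.Ioi p, g i) = ∑ i : Fin n, if p < i then g i else 0 := by
    rw [sum_ite_univ]; simp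
  rw [e1, e2, hp, ← Finset.sum_add_distrib, ← Finset.sum_add_distrib]
  refine Finset.sum_congr rfl fun i _ => ?_
  rcases lt_trichotomy i p with h | h | h
  · simp [h, ne_of_lt h, not_lt_of_gt h, asymm h]
  · simp [h]
  · simp [h, ne_of_gt h, not_lt_of_gt h, asymm h]


lemma sv_add (x y : Fin n → ZMod 2) : sv n (x + y) = sv n x + sv n y := by
  simp [sv, Finset.sum_add_distrib]

lemma ip_comm (x y : Fin n → ZMod 2) : ip n x y = ip n y x := by
  simp [ip, mul_comm]

lemma ip_self (x : Fin n → ZMod 2) : ip n x x = sv n x := by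
  unfold ip sv; simp_rw [z2_mul_self]

lemma ip_add_right (x y z : Fin n → ZMod 2) : ip n x (y + z) = ip n x y + ip n x z := by
  simp [ip, mul_add, Finset.sum_add_distrib]

lemma ip_add_left (x y z : Fin n → ZMod 2) : ip n (x + y) z = ip n x z + ip n y z := by
  simp [ip, add_mul, Finset.sum_add_distrib]

lemma bf_add_left (x y z : Fin n → ZMod 2) : bf n (x + y) z = bf n x z + bf n y z := by
  simp [bf, add_mul, Finset.sum_add_distrib]

lemma bf_add_right (x y z : Fin n → ZMod 2) : bf n x (y + z) = bf n x y + bf n x z := by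
  simp [bf, mul_add, Finset.sum_add_distrib]

lemma bf_self (d : Fin n → ZMod 2) : bf n d d = sg2 n d + sv n d := by
  unfold bf sg2 sv
  have h : ∀ j : Fin n, (∑ i ∈ Finset.Iic j, d i * d j)
      = (∑ i ∈ Finset.Iio j, d i * d j) + d j := by
    intro j
    rw [← Finset.Iio_insert, Finset.sum_insert (by simp), z2_mul_self]
    ring
  simp_rw [h]
  rw [Finset.sum_add_distrib]

lemma cross_sum (u w : Fin n → ZMod 2) :
    ((∑ j : Fin n, ∑ i ∈ Finset.Iio j, u i * w j)
      + ∑ j : Fin n, ∑ i ∈ Finset.Iio j, w i * u j)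
      = sv n u * sv n w + ip n u w := by
  simp only [sv, ip]
  have c2 : (∑ j : Fin n, ∑ i ∈ Finset.Iio j, w i * u j)
      = ∑ p : Fin n, w p * ∑ j ∈ Finset.Ioi p, u j := by
    rw [sum_Iio_comm (g := fun i j => w i * u j)]
    exact Finset.sum_congr rfl fun p _ => (Finset.mul_sum _ _ _).symm
  have c1 : (∑ j : Fin n, ∑ i ∈ Finset.Iio j, u i * w j)
      = ∑ p : Fin n, w p * ∑ i ∈ Finset.Iio p, u i := by
    refine Finset.sum_congr rfl fun p _ => ?_
    rw [← Finset.sum_mul, mul_comm]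
  rw [c1, c2, ← Finset.sum_add_distrib]
  have hp : ∀ p : Fin n, w p * (∑ i ∈ Finset.Iio p, u i) + w p * (∑ j ∈ Finset.Ioi p, u j)
      = (∑ i : Fin n, u i) * w p + u p * w p := by
    intro p
    have H := sum_Iio_self_Ioi u p
    linear_combination w p * H - w p * z2_add_self (u p)
  simp_rw [hp]
  rw [Finset.sum_add_distrib, ← Finset.mul_sum]

lemma sg2_add (u v : Fin n → ZMod 2) :
    sg2 n (u + v) = sg2 n u + sg2 n v + sv n u * sv n v + ip n u v := by
  unfold sg2
  have h : ∀ j : Fin n, ∀ i : Fin n, (u + v) i * (u + v) j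
      = (u i * u j + v i * v j) + (u i * v j + v i * u j) := by
    intro j i; simp only [Pi.add_apply]; ring
  simp_rw [h, Finset.sum_add_distrib]
  have := cross_sum u v
  unfold sg2 at *
  linear_combination this

lemma sum_Iio_split (y : Fin n → ZMod 2) {q r : Fin n} (h : q < r) :
    (∑ i ∈ Finset.Iio r, y i)
      = ((∑ i ∈ Finset.Iio q, y i) + y q) + ∑ i ∈ Finset.Ioo q r, y i := by
  have hu : Finset.Iio r = Finset.Iic q ∪ Finset.Ioo q r := by
    ext i
    simp only [Finset.mem_Iio, Finset.mem_union, Finset.mem_Iic, Finset.mem_Ioo]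
    constructor
    · intro hi
      rcases le_or_gt i q with h' | h'
      exacts [Or.inl h', Or.inr ⟨h', hi⟩]
    · rintro (h' | ⟨h1, h2⟩)
      exacts [lt_of_le_of_lt h' h, h2]
  have hd : Disjoint (Finset.Iic q) (Finset.Ioo q r) := by
    rw [Finset.disjoint_left]
    intro i hi hi'
    simp only [Finset.mem_Iic] at hi
    simp only [Finset.mem_Ioo] at hi'
    exact absurd hi'.1 (not_lt_of_ge hi)
  rw [hu, Finset.sum_union hd, ← Finset.Iio_insert, Finset.sum_insert (by simp)]
  ring

lemma part3 (y : Fin n → ZMod 2) {q r : Fin n} (h : q < r) :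
    (∑ k ∈ Finset.Ioi r, y k) + (∑ p ∈ Finset.Ioo q r, y p) + (∑ p ∈ Finset.Iio q, y p)
      = sv n y + y q + y r := by
  simp only [sv]
  have H := sum_Iio_self_Ioi y r
  rw [sum_Iio_split y h] at H
  linear_combination H - z2_add_self (y q) - z2_add_self (y r)

lemma T_eq (x y : Fin n → ZMod 2) :
    (∑ k : Fin n, ∑ j ∈ Finset.Iio k, ∑ i ∈ Finset.Iio j,
        (x i * x j * y k + x i * y j * x k + y i * x j * x k))
      = sg2 n x * sv n y + (sv n x + 1) * ip n x y := by
  have hA : (∑ k : Fin n, ∑ j ∈ Finset.Iio k, ∑ i ∈ Finset.Iio j, x i * x j * y k)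
      = ∑ r : Fin n, ∑ q ∈ Finset.Iio r, (x q * x r) * ∑ k ∈ Finset.Ioi r, y k := by
    rw [sum_Iio_comm (g := fun j k => ∑ i ∈ Finset.Iio j, x i * x j * y k)]
    refine Finset.sum_congr rfl fun j _ => ?_
    rw [Finset.sum_comm]
    exact Finset.sum_congr rfl fun i _ => (Finset.mul_sum _ _ _).symm
  have hB : (∑ k : Fin n, ∑ j ∈ Finset.Iio k, ∑ i ∈ Finset.Iio j, x i * y j * x k)
      = ∑ r : Fin n, ∑ q ∈ Finset.Iio r, (x q * x r) * ∑ p ∈ Finset.Ioo q r, y p := by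
    refine Finset.sum_congr rfl fun k _ => ?_
    rw [sum_Iio_Iio_comm k (g := fun i j => x i * y j * x k)]
    refine Finset.sum_congr rfl fun i _ => ?_
    rw [Finset.mul_sum]
    exact Finset.sum_congr rfl fun j _ => by ring
  have hC : (∑ k : Fin n, ∑ j ∈ Finset.Iio k, ∑ i ∈ Finset.Iio j, y i * x j * x k)
      = ∑ r : Fin n, ∑ q ∈ Finset.Iio r, (x q * x r) * ∑ p ∈ Finset.Iio q, y p := by
    refine Finset.sum_congr rfl fun k _ => ?_
    refine Finset.sum_congr rfl fun j _ => ?_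
    rw [Finset.mul_sum]
    exact Finset.sum_congr rfl fun i _ => by ring
  have hsplit : (∑ k : Fin n, ∑ j ∈ Finset.Iio k, ∑ i ∈ Finset.Iio j,
        (x i * x j * y k + x i * y j * x k + y i * x j * x k))
      = (∑ k : Fin n, ∑ j ∈ Finset.Iio k, ∑ i ∈ Finset.Iio j, x i * x j * y k)
        + (∑ k : Fin n, ∑ j ∈ Finset.Iio k, ∑ i ∈ Finset.Iio j, x i * y j * x k)
        + (∑ k : Fin n, ∑ j ∈ Finset.Iio k, ∑ i ∈ Finset.Iio j, y i * x j * x k) := by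
    simp_rw [Finset.sum_add_distrib]
  rw [hsplit, hA, hB, hC, ← Finset.sum_add_distrib, ← Finset.sum_add_distrib]
  have hmerge : ∀ r : Fin n, ∀ q ∈ Finset.Iio r,
      ((x q * x r) * (∑ k ∈ Finset.Ioi r, y k) + (x q * x r) * (∑ p ∈ Finset.Ioo q r, y p)
        + (x q * x r) * (∑ p ∈ Finset.Iio q, y p))
      = (x q * x r) * sv n y + ((x q * y q) * x r + x q * (x r * y r)) := by
    intro r q hq
    rw [Finset.mem_Iio] at hq
    have := part3 y hq
    have e : (x q * x r) * ((∑ k ∈ Finset.Ioi r, y k) + (∑ p ∈ Finset.Ioo q r, y p)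
        + (∑ p ∈ Finset.Iio q, y p)) = (x q * x r) * (sv n y + y q + y r) := by rw [this]
    linear_combination e
  have hstep : ∀ r : Fin n,
      ((∑ q ∈ Finset.Iio r, (x q * x r) * ∑ k ∈ Finset.Ioi r, y k)
        + (∑ q ∈ Finset.Iio r, (x q * x r) * ∑ p ∈ Finset.Ioo q r, y p)
        + ∑ q ∈ Finset.Iio r, (x q * x r) * ∑ p ∈ Finset.Iio q, y p)
      = ∑ q ∈ Finset.Iio r, ((x q * x r) * sv n y + ((x q * y q) * x r + x q * (x r * y r))) := by
    intro r
    rw [← Finset.sum_add_distrib, ← Finset.sum_add_distrib]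
    exact Finset.sum_congr rfl (hmerge r)
  rw [Finset.sum_congr rfl fun r _ => hstep r]
  simp_rw [Finset.sum_add_distrib]
  have h1 : (∑ r : Fin n, ∑ q ∈ Finset.Iio r, (x q * x r) * sv n y)
      = sg2 n x * sv n y := by
    unfold sg2
    rw [Finset.sum_mul]
    exact Finset.sum_congr rfl fun r _ => (Finset.sum_mul _ _ _).symm
  have h2 : ((∑ r : Fin n, ∑ q ∈ Finset.Iio r, (x q * y q) * x r)
      + ∑ r : Fin n, ∑ q ∈ Finset.Iio r, x q * (x r * y r))
      = (sv n x + 1) * ip n x y := by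
    have := cross_sum (fun p => x p * y p) x
    have hswap : (∑ j : Fin n, ∑ i ∈ Finset.Iio j, x i * (fun p => x p * y p) j)
        = ∑ r : Fin n, ∑ q ∈ Finset.Iio r, x q * (x r * y r) := rfl
    have hsv : sv n (fun p => x p * y p) = ip n x y := rfl
    have hip : ip n (fun p => x p * y p) x = ip n x y := by
      unfold ip
      refine Finset.sum_congr rfl fun p _ => ?_
      have e : x p * y p * x p = x p * x p * y p := by ring
      rw [e, z2_mul_self]
    rw [hswap, hsv, hip] at this
    rw [this]
    rw [ip_comm]
    ring
  rw [h1, ← h2]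

lemma fO_eq (x y : Fin n → ZMod 2) :
    fO n x y = sg2 n x * sv n y + (sv n x + 1) * ip n x y + bf n x y := by
  show (∑ k : Fin n, ∑ j ∈ Finset.Iio k, ∑ i ∈ Finset.Iio j,
      (x i * x j * y k + x i * y j * x k + y i * x j * x k))
    + (∑ j : Fin n, ∑ i ∈ Finset.Iic j, x i * y j) = _
  rw [T_eq]
  rfl

lemma fO_add_right (x y z : Fin n → ZMod 2) : fO n x (y + z) = fO n x y + fO n x z := by
  rw [fO_eq, fO_eq, fO_eq, sv_add, ip_add_right, bf_add_right]; ring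

lemma key (x x' : Fin n → ZMod 2) :
    fO n x (x + x') + fO n x' (x + x')
      = (sv n x + sv n x' + 1) * (sg2 n x + sg2 n x' + ip n x x')
        + sv n x * sv n x' + sv n x + sv n x' := by
  have e1 : fO n x (x + x') = sg2 n x * (sv n x + sv n x')
      + (sv n x + 1) * (sv n x + ip n x x') + bf n x (x + x') := by
    rw [fO_eq, sv_add, ip_add_right, ip_self]
  have e2 : fO n x' (x + x') = sg2 n x' * (sv n x + sv n x')
      + (sv n x' + 1) * (ip n x x' + sv n x') + bf n x' (x + x') := by
    rw [fO_eq, sv_add, ip_add_right, ip_comm x' x, ip_self]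
  have hb : bf n x (x + x') + bf n x' (x + x')
      = (sg2 n x + sg2 n x' + sv n x * sv n x' + ip n x x') + (sv n x + sv n x') := by
    rw [← bf_add_left, bf_self, sg2_add, sv_add]
  rw [e1, e2]
  have hgen : ∀ P Q a t B1 B2 c : ZMod 2, B1 + B2 = (P + Q + a * c + t) + (a + c) →
      (P * (a + c) + (a + 1) * (a + t) + B1) + (Q * (a + c) + (c + 1) * (t + c) + B2)
      = (a + c + 1) * (P + Q + t) + a * c + a + c := by decide
  exact hgen _ _ _ _ _ _ _ hb

lemma n_odd_cast (hn : n % 4 = 3) : (n : ZMod 2) = 1 := by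
  rw [← ZMod.natCast_mod n 2, show n % 2 = 1 by omega, Nat.cast_one]

lemma sv_one (hn : n % 4 = 3) : sv n (fun _ => (1 : ZMod 2)) = 1 := by
  unfold sv
  rw [Finset.sum_const, Finset.card_univ, Fintype.card_fin, nsmul_eq_mul, mul_one,
    n_odd_cast hn]

lemma sv_e (m : Fin n) : sv n (eVec n m) = 1 := by
  unfold sv eVec; simp

lemma sv_zero : sv n 0 = 0 := by simp [sv]

lemma sg2_zero : sg2 n 0 = 0 := by simp [sg2]

lemma ip_zero_left (x : Fin n → ZMod 2) : ip n 0 x = 0 := by simp [ip]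

lemma ip_zero_right (x : Fin n → ZMod 2) : ip n x 0 = 0 := by simp [ip]

lemma sg2_e (m : Fin n) : sg2 n (eVec n m) = 0 := by
  unfold sg2 eVec
  refine Finset.sum_eq_zero fun j _ => Finset.sum_eq_zero fun i hi => ?_
  rw [Finset.mem_Iio] at hi
  by_cases h1 : i = m
  · by_cases h2 : j = m
    · subst h1; subst h2; exact absurd hi (lt_irrefl _)
    · simp [h2]
  · simp [h1]

lemma sg2_one (hn : n % 4 = 3) : sg2 n (fun _ => (1 : ZMod 2)) = 1 := by
  unfold sg2
  have h1 : ∀ j : Fin n, (∑ i ∈ Finset.Iio j, (fun _ => (1:ZMod 2)) i * (fun _ => (1:ZMod 2)) j)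
      = ((j.val : ℕ) : ZMod 2) := by
    intro j
    have : ∀ i : Fin n, (fun _ => (1:ZMod 2)) i * (fun _ => (1:ZMod 2)) j = 1 := fun i => by simp
    rw [Finset.sum_congr rfl fun i _ => this i, Finset.sum_const, Fin.card_Iio,
      nsmul_eq_mul, mul_one]
  rw [Finset.sum_congr rfl fun j _ => h1 j, ← Nat.cast_sum]
  have h2 : (∑ j : Fin n, (j.val : ℕ)) = ∑ i ∈ Finset.range n, i :=
    Fin.sum_univ_eq_sum_range (fun i => i) n
  obtain ⟨k, hk⟩ : ∃ k, n = 4 * k + 3 := ⟨n / 4, by omega⟩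
  have h3 : (∑ i ∈ Finset.range n, i) * 2 = n * (n - 1) := Finset.sum_range_id_mul_two n
  have h4 : (∑ i ∈ Finset.range n, i) % 2 = 1 := by
    have hnn : n * (n - 1) = 2 * (8 * (k * k) + 10 * k + 3) := by
      subst hk
      have e : 4 * k + 3 - 1 = 4 * k + 2 := by omega
      rw [e]; ring
    rw [hnn] at h3
    generalize k * k = K at h3
    omega
  rw [h2, ← ZMod.natCast_mod, h4, Nat.cast_one]

lemma ip_e_left (m : Fin n) (x : Fin n → ZMod 2) : ip n (eVec n m) x = x m := by
  unfold ip eVec; simp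

lemma ip_e_right (x : Fin n → ZMod 2) (m : Fin n) : ip n x (eVec n m) = x m := by
  unfold ip eVec; simp

lemma ip_one_left (x : Fin n → ZMod 2) : ip n (fun _ => 1) x = sv n x := by
  unfold ip sv; simp

lemma ip_one_right (x : Fin n → ZMod 2) : ip n x (fun _ => 1) = sv n x := by
  unfold ip sv; simp

lemma eBar_decomp (m : Fin n) : eBarVec n m = (fun _ => (1 : ZMod 2)) + eVec n m := by
  funext i
  by_cases h : i = m
  · simp [eBarVec, eVec, h]; decide
  · simp [eBarVec, eVec, h]

lemma pair_of_cond (f : (Fin n → ZMod 2) → (Fin n → ZMod 2) → ZMod 2)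
    (A : Finset (Fin n → ZMod 2))
    (hlin : ∀ x, x ∈ A → ∀ y z, f x (y + z) = f x y + f x z)
    (hc : ∀ x ∈ A, ∀ x' ∈ A, x ≠ x' → f x (x + x') + f x' (x + x') = 1) :
    IsMultiplicativePair n f A Finset.univ := by
  intro a b
  have haddself : ∀ u : Fin n → ZMod 2, u + u = 0 := by
    intro u; funext i
    have h : ∀ c : ZMod 2, c + c = 0 := by decide
    exact h (u i)
  have hcancel : ∀ u v : Fin n → ZMod 2, u + (u + v) = v := by
    intro u v; rw [← add_assoc, haddself, zero_add]
  have sgn_sq : ∀ e : ZMod 2, sgn e * sgn e = 1 := by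
    intro e; unfold sgn; split_ifs <;> norm_num
  have sgn_mul : ∀ e e' : ZMod 2, sgn (e + e') = sgn e * sgn e' := by
    have h2 : ∀ c : ZMod 2, c = 0 ∨ c = 1 := by decide
    intro e e'
    rcases h2 e with rfl | rfl <;> rcases h2 e' with rfl | rfl <;>
      · norm_num [sgn]
        try decide
  set g : (Fin n → ZMod 2) → (Fin n → ZMod 2) → ℝ :=
    fun x z => sgn (f x (x + z)) * a x * b (x + z) with hg
  have h1 : ∀ z : Fin n → ZMod 2, ∀ x,
      (∑ y : Fin n → ZMod 2, if x + y = z then sgn (f x y) * a x * b y else 0) = g x z := by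
    intro z x
    rw [Finset.sum_eq_single (x + z)]
    · rw [if_pos (hcancel x z)]
    · intro y _ hy
      rw [if_neg]
      intro h
      exact hy (by rw [← h, hcancel])
    · intro hx; exact absurd (Finset.mem_univ _) hx
  have hdiag : ∀ x, x ∈ A → (∑ z : Fin n → ZMod 2, g x z * g x z)
      = a x ^ 2 * ∑ y : Fin n → ZMod 2, b y ^ 2 := by
    intro x _
    have e : ∀ z, g x z * g x z = a x ^ 2 * b (x + z) ^ 2 := by
      intro z
      have h := sgn_sq (f x (x + z))
      simp only [hg]
      calc sgn (f x (x + z)) * a x * b (x + z) * (sgn (f x (x + z)) * a x * b (x + z))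
          = sgn (f x (x + z)) * sgn (f x (x + z)) * (a x ^ 2 * b (x + z) ^ 2) := by ring
        _ = a x ^ 2 * b (x + z) ^ 2 := by rw [h, one_mul]
    rw [Finset.sum_congr rfl fun z _ => e z, ← Finset.mul_sum]
    congr 1
    exact Fintype.sum_equiv (Equiv.addLeft x) _ _ (fun z => rfl)
  have hoff : ∀ x, x ∈ A → ∀ x', x' ∈ A → x ≠ x' →
      (∑ z : Fin n → ZMod 2, g x z * g x' z) = 0 := by
    intro x hx x' hx' hne
    have key2 : ∀ z : Fin n → ZMod 2,
        g x (z + (x + x')) * g x' (z + (x + x')) = -(g x z * g x' z) := by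
      intro z
      have e1 : x + (z + (x + x')) = x' + z := by
        have h : x + (z + (x + x')) = (x + x) + (x' + z) := by abel
        rw [h, haddself, zero_add]
      have e2 : x' + (z + (x + x')) = x + z := by
        have h : x' + (z + (x + x')) = (x' + x') + (x + z) := by abel
        rw [h, haddself, zero_add]
      have f1 : f x (x' + z) = f x (x + z) + f x (x + x') := by
        have hxz : x' + z = (x + z) + (x + x') := by
          have h : (x + z) + (x + x') = (x + x) + (x' + z) := by abel
          rw [h, haddself, zero_add]
        rw [hxz, hlin x hx]
      have f2 : f x' (x + z) = f x' (x' + z) + f x' (x + x') := by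
        have hxz : x + z = (x' + z) + (x + x') := by
          have h : (x' + z) + (x + x') = (x' + x') + (x + z) := by abel
          rw [h, haddself, zero_add]
        rw [hxz, hlin x' hx']
      have hs := hc x hx x' hx' hne
      have hd : sgn (f x (x + x')) * sgn (f x' (x + x')) = -1 := by
        rw [← sgn_mul, hs]
        norm_num [sgn]
      have hsgn : sgn (f x (x' + z)) * sgn (f x' (x + z))
          = -(sgn (f x (x + z)) * sgn (f x' (x' + z))) := by
        rw [f1, f2, sgn_mul, sgn_mul]
        linear_combination (sgn (f x (x + z)) * sgn (f x' (x' + z))) * hd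
      simp only [hg]
      rw [e1, e2]
      calc sgn (f x (x' + z)) * a x * b (x' + z) * (sgn (f x' (x + z)) * a x' * b (x + z))
          = (sgn (f x (x' + z)) * sgn (f x' (x + z)))
              * (a x * b (x' + z) * (a x' * b (x + z))) := by ring
        _ = -(sgn (f x (x + z)) * sgn (f x' (x' + z)))
              * (a x * b (x' + z) * (a x' * b (x + z))) := by rw [hsgn]
        _ = -(sgn (f x (x + z)) * a x * b (x + z)
              * (sgn (f x' (x' + z)) * a x' * b (x' + z))) := by ring
    have hrev : (∑ z : Fin n → ZMod 2, g x z * g x' z)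
        = ∑ z : Fin n → ZMod 2, g x (z + (x + x')) * g x' (z + (x + x')) :=
      (Fintype.sum_equiv (Equiv.addRight (x + x')) _ _ (fun z => rfl)).symm
    have hneg : (∑ z : Fin n → ZMod 2, g x z * g x' z)
        = -∑ z : Fin n → ZMod 2, g x z * g x' z := by
      calc (∑ z : Fin n → ZMod 2, g x z * g x' z)
          = ∑ z : Fin n → ZMod 2, g x (z + (x + x')) * g x' (z + (x + x')) := hrev
        _ = ∑ z : Fin n → ZMod 2, -(g x z * g x' z) :=
            Finset.sum_congr rfl fun z _ => key2 z
        _ = -∑ z : Fin n → ZMod 2, g x z * g x' z := by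
            rw [Finset.sum_neg_distrib]
    linarith
  calc (∑ x ∈ A, a x ^ 2) * ∑ y ∈ Finset.univ, b y ^ 2
      = ∑ x ∈ A, a x ^ 2 * ∑ y ∈ Finset.univ, b y ^ 2 := by rw [Finset.sum_mul]
    _ = ∑ x ∈ A, ∑ x' ∈ A, ∑ z : Fin n → ZMod 2, g x z * g x' z := by
        refine Finset.sum_congr rfl fun x hx => ?_
        rw [Finset.sum_eq_single x
          (fun x' hx' hne => hoff x hx x' hx' (Ne.symm hne))
          (fun h => absurd hx h), hdiag x hx]
    _ = ∑ x ∈ A, ∑ z : Fin n → ZMod 2, ∑ x' ∈ A, g x z * g x' z :=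
        Finset.sum_congr rfl fun x _ => Finset.sum_comm
    _ = ∑ z : Fin n → ZMod 2, ∑ x ∈ A, ∑ x' ∈ A, g x z * g x' z := Finset.sum_comm
    _ = ∑ z : Fin n → ZMod 2, (∑ x ∈ A, g x z) ^ 2 := by
        refine Finset.sum_congr rfl fun z _ => ?_
        rw [sq, Finset.sum_mul_sum]
    _ = ∑ z : Fin n → ZMod 2,
          (∑ x ∈ A, ∑ y ∈ Finset.univ,
            if x + y = z then sgn (f x y) * a x * b y else 0) ^ 2 := by
        refine Finset.sum_congr rfl fun z _ => ?_
        rw [Finset.sum_congr rfl fun x _ => h1 z x]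

lemma sv_ebar (hn : n % 4 = 3) (m : Fin n) : sv n (eBarVec n m) = 0 := by
  rw [eBar_decomp, sv_add, sv_one hn, sv_e]; decide

lemma sg2_ebar (hn : n % 4 = 3) (m : Fin n) : sg2 n (eBarVec n m) = 1 := by
  rw [eBar_decomp, sg2_add, sg2_one hn, sg2_e, sv_one hn, sv_e, ip_one_left, sv_e]; decide

end HurAux

open HurAux in
/-- For `n ≡ 3 (mod 4)`, the set `H = {e_0, ē_0} ∪ {e_i} ∪ {ē_i}` (where `e_0` is
the zero vector and `ē_0` the all-ones vector) has cardinality `2n+2` and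
`(H, (ℤ/2ℤ)^n)` is a multiplicative pair for `f_O`. -/
theorem hurwitzian_set_three_mod_four (n : ℕ) (hn : n % 4 = 3) :
    (insert (0 : Fin n → ZMod 2) (insert (fun _ => 1)
        ((Finset.univ.image (eVec n)) ∪ (Finset.univ.image (eBarVec n))))).card
      = 2 * n + 2 ∧
    IsMultiplicativePair n (fO n)
      (insert (0 : Fin n → ZMod 2) (insert (fun _ => 1)
        ((Finset.univ.image (eVec n)) ∪ (Finset.univ.image (eBarVec n)))))
      Finset.univ := by
  have einj : Function.Injective (eVec n) := by
    intro m l h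
    by_cases hml : m = l
    · exact hml
    · have h2 := congrFun h m
      simp only [eVec, if_pos rfl, if_neg hml] at h2
      exact absurd h2 one_ne_zero
  have ebinj : Function.Injective (eBarVec n) := by
    intro m l h
    by_cases hml : m = l
    · exact hml
    · have h2 := congrFun h m
      simp only [eBarVec, if_pos rfl, if_neg hml] at h2
      exact absurd h2.symm one_ne_zero
  have hdisj : Disjoint (Finset.univ.image (eVec n)) (Finset.univ.image (eBarVec n)) := by
    rw [Finset.disjoint_left]
    rintro v hv hv'
    simp only [Finset.mem_image, Finset.mem_univ, true_and] at hv hv'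
    obtain ⟨m, rfl⟩ := hv
    obtain ⟨l, hl⟩ := hv'
    have h2 : sv n (eBarVec n l) = sv n (eVec n m) := by rw [hl]
    rw [sv_ebar hn, sv_e] at h2
    exact absurd h2.symm one_ne_zero
  have h1mem : (fun _ => (1 : ZMod 2)) ∉
      (Finset.univ.image (eVec n)) ∪ (Finset.univ.image (eBarVec n)) := by
    intro hmem
    rw [Finset.mem_union] at hmem
    rcases hmem with hm | hm <;>
      simp only [Finset.mem_image, Finset.mem_univ, true_and] at hm
    · obtain ⟨m, hm⟩ := hm
      have h2 : sg2 n (eVec n m) = sg2 n (fun _ => (1 : ZMod 2)) := by rw [hm]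
      rw [sg2_e, sg2_one hn] at h2
      exact absurd h2 zero_ne_one
    · obtain ⟨m, hm⟩ := hm
      have h2 : sv n (eBarVec n m) = sv n (fun _ => (1 : ZMod 2)) := by rw [hm]
      rw [sv_ebar hn, sv_one hn] at h2
      exact absurd h2 zero_ne_one
  have h0mem : (0 : Fin n → ZMod 2) ∉ insert (fun _ => (1 : ZMod 2))
      ((Finset.univ.image (eVec n)) ∪ (Finset.univ.image (eBarVec n))) := by
    intro hmem
    rw [Finset.mem_insert, Finset.mem_union] at hmem
    rcases hmem with hm | hm | hm
    · have h2 : sv n (0 : Fin n → ZMod 2) = sv n (fun _ => (1 : ZMod 2)) := by rw [hm]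
      rw [sv_zero, sv_one hn] at h2
      exact absurd h2 zero_ne_one
    · simp only [Finset.mem_image, Finset.mem_univ, true_and] at hm
      obtain ⟨m, hm⟩ := hm
      have h2 : sv n (eVec n m) = sv n (0 : Fin n → ZMod 2) := by rw [hm]
      rw [sv_zero, sv_e] at h2
      exact absurd h2 one_ne_zero
    · simp only [Finset.mem_image, Finset.mem_univ, true_and] at hm
      obtain ⟨m, hm⟩ := hm
      have h2 : sg2 n (eBarVec n m) = sg2 n (0 : Fin n → ZMod 2) := by rw [hm]
      rw [sg2_zero, sg2_ebar hn] at h2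
      exact absurd h2 one_ne_zero
  constructor
  · rw [Finset.card_insert_of_notMem h0mem, Finset.card_insert_of_notMem h1mem,
      Finset.card_union_of_disjoint hdisj,
      Finset.card_image_of_injective _ einj, Finset.card_image_of_injective _ ebinj,
      Finset.card_univ, Fintype.card_fin]
    omega
  · apply pair_of_cond
    · intro x _ y z
      exact fO_add_right x y z
    · intro x hx x' hx' hne
      have hmem : ∀ v : Fin n → ZMod 2,
          v ∈ insert (0 : Fin n → ZMod 2) (insert (fun _ => 1)
            ((Finset.univ.image (eVec n)) ∪ (Finset.univ.image (eBarVec n)))) →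
          v = 0 ∨ v = (fun _ => 1) ∨ (∃ m, v = eVec n m) ∨ ∃ m, v = eBarVec n m := by
        intro v hv
        simp only [Finset.mem_insert, Finset.mem_union, Finset.mem_image,
          Finset.mem_univ, true_and] at hv
        rcases hv with h | h | ⟨m, h⟩ | ⟨m, h⟩
        exacts [Or.inl h, Or.inr (Or.inl h), Or.inr (Or.inr (Or.inl ⟨m, h.symm⟩)),
          Or.inr (Or.inr (Or.inr ⟨m, h.symm⟩))]
      rw [key]
      rcases hmem x hx with rfl | rfl | ⟨m, rfl⟩ | ⟨m, rfl⟩ <;>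
        rcases hmem x' hx' with rfl | rfl | ⟨l, rfl⟩ | ⟨l, rfl⟩
      -- (0, 0)
      · exact absurd rfl hne
      -- (0, 1)
      · rw [sv_zero, sg2_zero, sv_one hn, sg2_one hn, ip_zero_left]; decide
      -- (0, e)
      · rw [sv_zero, sg2_zero, sv_e, sg2_e, ip_zero_left]; decide
      -- (0, ebar)
      · rw [sv_zero, sg2_zero, sv_ebar hn, sg2_ebar hn, ip_zero_left]; decide
      -- (1, 0)
      · rw [sv_zero, sg2_zero, sv_one hn, sg2_one hn, ip_zero_right]; decide
      -- (1, 1)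
      · exact absurd rfl hne
      -- (1, e)
      · rw [sv_one hn, sg2_one hn, sv_e, sg2_e, ip_one_left, sv_e]; decide
      -- (1, ebar)
      · rw [sv_one hn, sg2_one hn, sv_ebar hn, sg2_ebar hn, ip_one_left, sv_ebar hn]; decide
      -- (e, 0)
      · rw [sv_zero, sg2_zero, sv_e, sg2_e, ip_zero_right]; decide
      -- (e, 1)
      · rw [sv_one hn, sg2_one hn, sv_e, sg2_e, ip_one_right, sv_e]; decide
      -- (e, e)
      · have hml : m ≠ l := fun h => hne (by rw [h])
        rw [sv_e, sv_e, sg2_e, sg2_e, ip_e_left]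
        simp only [eVec, if_neg hml]
        decide
      -- (e, ebar)
      · rw [sv_e, sv_ebar hn, sg2_e, sg2_ebar hn]
        by_cases hml : m = l
        · subst hml
          rw [ip_e_left]
          simp only [eBarVec, if_pos rfl]
          decide
        · rw [ip_e_left]
          simp only [eBarVec, if_neg hml]
          decide
      -- (ebar, 0)
      · rw [sv_zero, sg2_zero, sv_ebar hn, sg2_ebar hn, ip_zero_right]; decide
      -- (ebar, 1)
      · rw [sv_one hn, sg2_one hn, sv_ebar hn, sg2_ebar hn, ip_one_right, sv_ebar hn]; decide
      -- (ebar, e)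
      · rw [sv_ebar hn, sv_e, sg2_ebar hn, sg2_e, ip_e_right]
        by_cases hml : l = m
        · subst hml
          simp only [eBarVec, if_pos rfl]
          decide
        · simp only [eBarVec, if_neg hml]
          decide
      -- (ebar, ebar)
      · have hml : m ≠ l := fun h => hne (by rw [h])
        rw [sv_ebar hn, sv_ebar hn, sg2_ebar hn, sg2_ebar hn,
          eBar_decomp m, ip_add_left, ip_one_left, sv_ebar hn, ip_e_left]
        simp only [eBarVec, if_neg hml]
        decide
end

section
/- Let n be even (n ≡ 0 or 2 mod 4, n ≥ 2) and let H = {e_i : 1 ≤ i ≤ n} ∪ {e_1 + e_i : 1 ≤ i ≤ n} ⊆ (ℤ/2ℤ)^n, where e_i is the i-th standard basis vector. Then H has cardinality 2n and (H, (ℤ/2ℤ)^n) is a multiplicative pair with respect to the octonion-type twisting function f_O. -/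
lemma sgn_add (a b : ZMod 2) : sgn (a + b) = sgn a * sgn b := by
  have h : ∀ c : ZMod 2, c = 0 ∨ c = 1 := by decide
  have h2 : (1 : ZMod 2) + 1 = 0 := by decide
  rcases h a with ha | ha <;> rcases h b with hb | hb <;>
    simp [ha, hb, sgn, h2] <;> norm_num

lemma fO_add_right (n : ℕ) (x y y' : Fin n → ZMod 2) :
    fO n x (y + y') = fO n x y + fO n x y' := by
  simp only [fO, Pi.add_apply, mul_add, add_mul, Finset.sum_add_distrib]
  ring

lemma sum_eVec (n : ℕ) (q : Fin n) (s : Finset (Fin n)) :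
    ∑ i ∈ s, eVec n q i = if q ∈ s then 1 else 0 := by
  simp [eVec, Finset.sum_ite_eq' s q (fun _ => (1 : ZMod 2))]

lemma fO_eVec (n : ℕ) (p : Fin n) (y : Fin n → ZMod 2) :
    fO n (eVec n p) y = ∑ j ∈ Finset.Ici p, y j := by
  unfold fO
  have hcub : (∑ k : Fin n, ∑ j ∈ Finset.Iio k, ∑ i ∈ Finset.Iio j,
      (eVec n p i * eVec n p j * y k + eVec n p i * y j * eVec n p k +
        y i * eVec n p j * eVec n p k)) = 0 := by
    apply Finset.sum_eq_zero; intro k _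
    apply Finset.sum_eq_zero; intro j hj
    apply Finset.sum_eq_zero; intro i hi
    simp only [Finset.mem_Iio] at hj hi
    simp only [eVec]
    split_ifs <;> simp_all <;> exact absurd (hi.trans hj) (lt_irrefl _)
  rw [hcub, zero_add]
  have hq : ∀ j : Fin n, ∑ i ∈ Finset.Iic j, eVec n p i * y j
      = if j ∈ Finset.Ici p then y j else 0 := by
    intro j
    rw [← Finset.sum_mul, sum_eVec]
    by_cases h : p ≤ j <;> simp [Finset.mem_Iic, Finset.mem_Ici, h]
  rw [Finset.sum_congr rfl (fun j _ => hq j), Finset.sum_ite_mem, Finset.univ_inter]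

lemma h_ind (n : ℕ) (s : Finset (Fin n)) (F : Fin n → ZMod 2) (a : Fin n) :
    ∑ j ∈ s, F j * eVec n a j = if a ∈ s then F a else 0 := by
  simp only [eVec, mul_ite, mul_one, mul_zero]
  exact Finset.sum_ite_eq' s a F

lemma fO_e0_add (n : ℕ) (z0 p : Fin n) (hz0 : ∀ j, z0 ≤ j) (hzp : z0 < p)
    (y : Fin n → ZMod 2) :
    fO n (eVec n z0 + eVec n p) y = y z0 + ∑ j ∈ Finset.Ioi p, y j := by
  have h2 : (1 : ZMod 2) + 1 = 0 := by decide
  set I : Fin n → ZMod 2 := fun j => (if z0 < j then 1 else 0) + (if p < j then 1 else 0) with hI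
  set G : Fin n → ZMod 2 := fun j => ∑ i ∈ Finset.Iio j, y i with hG
  have hIz : I z0 = 0 := by
    simp [hI, lt_irrefl, not_lt.mpr (hz0 p)]
  have hIp : I p = 1 := by simp [hI, hzp, lt_irrefl]
  have hGz : G z0 = 0 := by
    apply Finset.sum_eq_zero
    intro i hi
    exact absurd (Finset.mem_Iio.mp hi) (not_lt.mpr (hz0 i))
  have h_i : ∀ s : Finset (Fin n), ∑ i ∈ s, (eVec n z0 i + eVec n p i)
      = (if z0 ∈ s then 1 else 0) + (if p ∈ s then 1 else 0) := by
    intro s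
    rw [Finset.sum_add_distrib, sum_eVec, sum_eVec]
  -- inner i-sum of the cubic part
  have h1 : ∀ k j : Fin n, (∑ i ∈ Finset.Iio j,
      ((eVec n z0 + eVec n p) i * (eVec n z0 + eVec n p) j * y k +
       (eVec n z0 + eVec n p) i * y j * (eVec n z0 + eVec n p) k +
       y i * (eVec n z0 + eVec n p) j * (eVec n z0 + eVec n p) k))
      = I j * ((eVec n z0 + eVec n p) j * y k) +
        I j * (y j * (eVec n z0 + eVec n p) k) +
        G j * ((eVec n z0 + eVec n p) j * (eVec n z0 + eVec n p) k) := by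
    intro k j
    rw [Finset.sum_add_distrib, Finset.sum_add_distrib]
    simp only [Pi.add_apply, mul_assoc, ← Finset.sum_mul]
    rw [h_i]
    simp [hI, hG, Finset.mem_Iio]
  -- the j-sum of the cubic part
  have h2j : ∀ k : Fin n, (∑ j ∈ Finset.Iio k,
      (I j * ((eVec n z0 + eVec n p) j * y k) +
        I j * (y j * (eVec n z0 + eVec n p) k) +
        G j * ((eVec n z0 + eVec n p) j * (eVec n z0 + eVec n p) k)))
      = (if p < k then y k else 0) +
        (∑ j ∈ Finset.Iio k, I j * y j) * (eVec n z0 + eVec n p) k := by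
    intro k
    rw [Finset.sum_add_distrib, Finset.sum_add_distrib]
    have tA : (∑ j ∈ Finset.Iio k, I j * ((eVec n z0 + eVec n p) j * y k))
        = if p < k then y k else 0 := by
      simp only [Pi.add_apply, mul_add, add_mul, ← mul_assoc, Finset.sum_add_distrib,
        ← Finset.sum_mul, h_ind]
      simp [hIz, hIp, Finset.mem_Iio]
    have tB : (∑ j ∈ Finset.Iio k, I j * (y j * (eVec n z0 + eVec n p) k))
        = (∑ j ∈ Finset.Iio k, I j * y j) * (eVec n z0 + eVec n p) k := by
      simp only [← mul_assoc, ← Finset.sum_mul]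
    have tC : (∑ j ∈ Finset.Iio k, G j * ((eVec n z0 + eVec n p) j * (eVec n z0 + eVec n p) k))
        = 0 := by
      simp only [Pi.add_apply, mul_add, add_mul, ← mul_assoc, Finset.sum_add_distrib,
        ← Finset.sum_mul, h_ind]
      by_cases hpk : p < k
      · have hk0 : k ≠ z0 := ne_of_gt (lt_of_le_of_lt (hz0 p) hpk)
        have hkp : k ≠ p := ne_of_gt hpk
        simp [hGz, Finset.mem_Iio, hpk, eVec, hk0, hkp]
      · simp [hGz, Finset.mem_Iio, hpk]
    rw [tA, tB, tC, add_zero]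
  have addself : ∀ c : ZMod 2, c + c = 0 := by decide
  have hJz : (∑ j ∈ Finset.Iio z0, I j * y j) = 0 := by
    apply Finset.sum_eq_zero
    intro i hi
    exact absurd (Finset.mem_Iio.mp hi) (not_lt.mpr (hz0 i))
  simp only [fO]
  rw [Finset.sum_congr rfl
    (fun k _ => (Finset.sum_congr rfl (fun j hj => h1 k j)).trans (h2j k)),
    Finset.sum_add_distrib]
  have hB : (∑ k : Fin n, (∑ j ∈ Finset.Iio k, I j * y j) * (eVec n z0 + eVec n p) k)
      = ∑ j ∈ Finset.Iio p, I j * y j := by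
    simp only [Pi.add_apply, mul_add, Finset.sum_add_distrib, h_ind]
    simp [hJz]
  rw [hB]
  have hQ : (∑ j : Fin n, ∑ i ∈ Finset.Iic j, (eVec n z0 + eVec n p) i * y j)
      = ∑ j : Fin n, (1 + if p ≤ j then 1 else 0) * y j := by
    apply Finset.sum_congr rfl
    intro j _
    simp only [Pi.add_apply]
    rw [← Finset.sum_mul, h_i]
    simp [Finset.mem_Iic, hz0 j]
  rw [hQ]
  have hy0 : y z0 = ∑ j : Fin n, if j = z0 then y j else 0 := by
    rw [Finset.sum_ite_eq' Finset.univ z0 y]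
    simp
  have hIoi : (∑ j ∈ Finset.Ioi p, y j) = ∑ j : Fin n, if j ∈ Finset.Ioi p then y j else 0 := by
    rw [Finset.sum_ite_mem, Finset.univ_inter]
  have hIio : (∑ j ∈ Finset.Iio p, I j * y j)
      = ∑ j : Fin n, if j ∈ Finset.Iio p then I j * y j else 0 := by
    rw [Finset.sum_ite_mem, Finset.univ_inter]
  rw [hy0, hIoi, hIio, ← Finset.sum_add_distrib, ← Finset.sum_add_distrib,
    ← Finset.sum_add_distrib]
  apply Finset.sum_congr rfl
  intro j _
  simp only [Finset.mem_Iio, Finset.mem_Ioi, hI]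
  rcases lt_trichotomy j p with h | h | h
  · have h' : ¬ p < j := asymm h
    have h'' : ¬ p ≤ j := not_le.mpr h
    by_cases hz : j = z0
    · subst hz
      simp [h, h', h'', lt_irrefl]
    · have hzj : z0 < j := lt_of_le_of_ne (hz0 j) (Ne.symm hz)
      simp [h, h', h'', hzj, hz, addself]
  · subst h
    have hz : ¬ j = z0 := ne_of_gt hzp
    simp [lt_irrefl, le_refl, hz, h2, addself]
  · have hz : ¬ j = z0 := ne_of_gt (lt_trans hzp h)
    simp [h, asymm h, le_of_lt h, hz, h2, not_lt.mpr (le_of_lt h), addself]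

lemma zadd (c : ZMod 2) : c + c = 0 := by
  have h : ∀ c : ZMod 2, c + c = 0 := by decide
  exact h c

lemma vec_addself (n : ℕ) (v : Fin n → ZMod 2) : v + v = 0 :=
  funext fun j => zadd (v j)

lemma fO_zero_left (n : ℕ) (y : Fin n → ZMod 2) : fO n 0 y = 0 := by
  simp [fO]

lemma eVec_inj (n : ℕ) {p q : Fin n} (h : eVec n p = eVec n q) : p = q := by
  have := congrFun h p
  simp only [eVec, if_pos rfl] at this
  by_cases hpq : p = q
  · exact hpq
  · rw [if_neg hpq] at this
    exact absurd this one_ne_zero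

lemma key_AA (n : ℕ) (p q : Fin n) (hpq : p ≠ q) :
    fO n (eVec n p) (eVec n p + eVec n q) + fO n (eVec n q) (eVec n p + eVec n q) = 1 := by
  rw [fO_eVec, fO_eVec]
  simp only [Pi.add_apply, Finset.sum_add_distrib, sum_eVec, Finset.mem_Ici, le_refl, if_pos]
  rcases lt_trichotomy p q with h | h | h
  · simp [le_of_lt h, not_le.mpr h, add_comm, add_assoc, zadd]
  · exact absurd h hpq
  · simp [le_of_lt h, not_le.mpr h, add_comm, add_assoc, zadd]

lemma key_AB (n : ℕ) (z0 : Fin n) (hz0 : ∀ j, z0 ≤ j) (p q : Fin n) :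
    fO n (eVec n p) (eVec n p + (eVec n z0 + eVec n q)) +
    fO n (eVec n z0 + eVec n q) (eVec n p + (eVec n z0 + eVec n q)) = 1 := by
  by_cases hq : q = z0
  · subst hq
    rw [vec_addself, fO_zero_left, add_zero, add_zero, fO_eVec]
    simp [sum_eVec]
  · have hzq : z0 < q := lt_of_le_of_ne (hz0 q) (Ne.symm hq)
    rw [fO_eVec, fO_e0_add n z0 q hz0 hzq]
    simp only [Pi.add_apply, Finset.sum_add_distrib, sum_eVec]
    simp only [eVec, Finset.mem_Ici, Finset.mem_Ioi, le_refl, if_pos, lt_irrefl,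
      not_lt.mpr (hz0 q), if_neg, if_false, not_false_iff]
    have hzq' : ¬ z0 = q := fun h => hq h.symm
    by_cases hpz : p = z0
    · subst hpz
      simp only [le_refl, if_pos, hz0 q, hzq', if_neg, not_false_iff, if_true,
        not_lt.mpr (hz0 q), eq_self_iff_true]
      decide
    · have hle : ¬ p ≤ z0 := fun h => hpz (le_antisymm h (hz0 p))
      have hzp : ¬ z0 = p := fun h => hpz h.symm
      rcases lt_trichotomy p q with h | h | h
      · simp only [hle, hzp, hzq', if_neg, not_false_iff, le_of_lt h, if_pos,
          not_lt.mpr (le_of_lt h), if_true]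
        decide
      · subst h
        simp only [hle, hzp, hzq', if_neg, not_false_iff, le_refl, if_pos, lt_irrefl, if_true]
        decide
      · simp only [hle, hzp, hzq', not_le.mpr h, if_neg, not_false_iff, h, if_pos, if_true]
        decide

lemma key_BB (n : ℕ) (z0 : Fin n) (hz0 : ∀ j, z0 ≤ j) (p q : Fin n) (hpq : p ≠ q) :
    fO n (eVec n z0 + eVec n p) ((eVec n z0 + eVec n p) + (eVec n z0 + eVec n q)) +
    fO n (eVec n z0 + eVec n q) ((eVec n z0 + eVec n p) + (eVec n z0 + eVec n q)) = 1 := by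
  have hd : (eVec n z0 + eVec n p) + (eVec n z0 + eVec n q) = eVec n p + eVec n q := by
    have h := vec_addself n (eVec n z0)
    calc (eVec n z0 + eVec n p) + (eVec n z0 + eVec n q)
        = (eVec n z0 + eVec n z0) + (eVec n p + eVec n q) := by ring
      _ = eVec n p + eVec n q := by rw [h, zero_add]
  rw [hd]
  by_cases hp : p = z0
  · subst hp
    rw [vec_addself, fO_zero_left, zero_add]
    have hzq : p < q := lt_of_le_of_ne (hz0 q) hpq
    rw [fO_e0_add n p q (hz0) hzq]
    simp only [Pi.add_apply, Finset.sum_add_distrib, sum_eVec]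
    simp only [eVec, Finset.mem_Ioi, lt_irrefl, if_neg, not_false_iff, if_pos, le_refl]
    have h1 : ¬ p = q := hpq
    have h2 : ¬ q < p := not_lt.mpr (hz0 q)
    simp only [h1, h2, if_neg, not_false_iff, if_pos, eq_self_iff_true, if_true]
    decide
  · by_cases hq : q = z0
    · subst hq
      rw [vec_addself, fO_zero_left, add_zero]
      have hzp : q < p := lt_of_le_of_ne (hz0 p) (Ne.symm hpq)
      rw [fO_e0_add n q p (hz0) hzp]
      simp only [Pi.add_apply, Finset.sum_add_distrib, sum_eVec]
      have h1 : ¬ q = p := Ne.symm hpq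
      have h2 : ¬ p < q := not_lt.mpr (hz0 p)
      simp only [eVec, Finset.mem_Ioi, lt_irrefl, h1, h2, if_neg, not_false_iff,
        eq_self_iff_true, if_true, if_pos]
      decide
    · have hzp : z0 < p := lt_of_le_of_ne (hz0 p) (Ne.symm hp)
      have hzq : z0 < q := lt_of_le_of_ne (hz0 q) (Ne.symm hq)
      rw [fO_e0_add n z0 p hz0 hzp, fO_e0_add n z0 q hz0 hzq]
      simp only [Pi.add_apply, Finset.sum_add_distrib, sum_eVec]
      have h1 : ¬ z0 = p := fun h => hp h.symm
      have h2 : ¬ z0 = q := fun h => hq h.symm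
      simp only [eVec, Finset.mem_Ioi, lt_irrefl, h1, h2, if_neg, not_false_iff]
      rcases lt_trichotomy p q with h | h | h
      · simp only [h, not_lt.mpr (le_of_lt h), if_pos, if_neg, not_false_iff]
        decide
      · exact absurd h hpq
      · simp only [h, not_lt.mpr (le_of_lt h), if_pos, if_neg, not_false_iff]
        decide

lemma sgn_one : sgn 1 = -1 := by
  simp [sgn]

lemma offdiag (n : ℕ) (x x' : Fin n → ZMod 2)
    (hkey : fO n x (x + x') + fO n x' (x + x') = 1)
    (a b : (Fin n → ZMod 2) → ℝ) :
    (∑ z : Fin n → ZMod 2, (sgn (fO n x (x + z)) * a x * b (x + z)) *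
      (sgn (fO n x' (x' + z)) * a x' * b (x' + z))) = 0 := by
  set d := x + x' with hdd
  set F : (Fin n → ZMod 2) → ℝ := fun z => (sgn (fO n x (x + z)) * a x * b (x + z)) *
      (sgn (fO n x' (x' + z)) * a x' * b (x' + z)) with hF
  have hre : ∑ z : Fin n → ZMod 2, F z = ∑ z : Fin n → ZMod 2, F (z + d) :=
    (Equiv.sum_comp (Equiv.addRight d) F).symm
  have hsgn : sgn (fO n x d) * sgn (fO n x' d) = -1 := by
    rw [← sgn_add, hkey, sgn_one]
  have hneg : ∀ z : Fin n → ZMod 2, F (z + d) = - F z := by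
    intro z
    have e1 : x + (z + d) = x' + z := by
      rw [hdd]
      have h : x + (z + (x + x')) = (x + x) + (x' + z) := by ring
      rw [h, vec_addself, zero_add]
    have e2 : x' + (z + d) = x + z := by
      rw [hdd]
      have h : x' + (z + (x + x')) = (x' + x') + (x + z) := by ring
      rw [h, vec_addself, zero_add]
    have s1 : x' + z = (x + z) + d := by
      rw [hdd]
      have h : (x + z) + (x + x') = (x + x) + (x' + z) := by ring
      rw [h, vec_addself, zero_add]
    have s2 : x + z = (x' + z) + d := by
      rw [hdd]
      have h : (x' + z) + (x + x') = (x' + x') + (x + z) := by ring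
      rw [h, vec_addself, zero_add]
    have f1 : fO n x (x' + z) = fO n x (x + z) + fO n x d := by
      rw [s1, fO_add_right]
    have f2 : fO n x' (x + z) = fO n x' (x' + z) + fO n x' d := by
      rw [s2, fO_add_right]
    simp only [hF, e1, e2, f1, f2, sgn_add]
    calc (sgn (fO n x (x + z)) * sgn (fO n x d) * a x * b (x' + z)) *
          (sgn (fO n x' (x' + z)) * sgn (fO n x' d) * a x' * b (x + z))
        = (sgn (fO n x d) * sgn (fO n x' d)) *
          ((sgn (fO n x (x + z)) * a x * b (x + z)) *
            (sgn (fO n x' (x' + z)) * a x' * b (x' + z))) := by ring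
      _ = - ((sgn (fO n x (x + z)) * a x * b (x + z)) *
            (sgn (fO n x' (x' + z)) * a x' * b (x' + z))) := by rw [hsgn]; ring
  have hzero : ∑ z : Fin n → ZMod 2, F z = - ∑ z : Fin n → ZMod 2, F z := by
    calc ∑ z : Fin n → ZMod 2, F z = ∑ z : Fin n → ZMod 2, F (z + d) := hre
      _ = ∑ z : Fin n → ZMod 2, - F z := Finset.sum_congr rfl (fun z _ => hneg z)
      _ = - ∑ z : Fin n → ZMod 2, F z := by rw [Finset.sum_neg_distrib]
  linarith

lemma key (n : ℕ) (z0 : Fin n) (hz0 : ∀ j, z0 ≤ j) (x x' : Fin n → ZMod 2)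
    (hx : (∃ p, x = eVec n p) ∨ ∃ p, x = eVec n z0 + eVec n p)
    (hx' : (∃ p, x' = eVec n p) ∨ ∃ p, x' = eVec n z0 + eVec n p)
    (hne : x ≠ x') :
    fO n x (x + x') + fO n x' (x + x') = 1 := by
  rcases hx with ⟨p, rfl⟩ | ⟨p, rfl⟩ <;> rcases hx' with ⟨q, rfl⟩ | ⟨q, rfl⟩
  · exact key_AA n p q (fun h => hne (by rw [h]))
  · exact key_AB n z0 hz0 p q
  · rw [add_comm (fO n (eVec n z0 + eVec n p) _), add_comm (eVec n z0 + eVec n p)]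
    exact key_AB n z0 hz0 q p
  · exact key_BB n z0 hz0 p q (fun h => hne (by rw [h]))

lemma sgn_mul_self (e : ZMod 2) : sgn e * sgn e = 1 := by
  rw [← sgn_add, zadd]
  simp [sgn]

lemma mult (n : ℕ) (z0 : Fin n) (hz0 : ∀ j, z0 ≤ j) (H : Finset (Fin n → ZMod 2))
    (hH : ∀ x ∈ H, (∃ p, x = eVec n p) ∨ ∃ p, x = eVec n z0 + eVec n p) :
    IsMultiplicativePair n (fO n) H Finset.univ := by
  intro a b
  set c : (Fin n → ZMod 2) → (Fin n → ZMod 2) → ℝ :=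
    fun x z => sgn (fO n x (x + z)) * a x * b (x + z) with hc
  have step1 : ∀ z x : Fin n → ZMod 2,
      (∑ y : Fin n → ZMod 2, if x + y = z then sgn (fO n x y) * a x * b y else 0)
      = c x z := by
    intro z x
    have hcond : ∀ y : Fin n → ZMod 2, (x + y = z) ↔ (y = x + z) := by
      intro y
      constructor
      · intro h; rw [← h, ← add_assoc, vec_addself, zero_add]
      · intro h; rw [h, ← add_assoc, vec_addself, zero_add]
    simp only [hcond]
    rw [Finset.sum_ite_eq' Finset.univ (x + z) (fun y => sgn (fO n x y) * a x * b y),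
      if_pos (Finset.mem_univ _)]
  calc (∑ x ∈ H, a x ^ 2) * (∑ y : Fin n → ZMod 2, b y ^ 2)
      = ∑ x ∈ H, ∑ z : Fin n → ZMod 2, c x z * c x z := by
        rw [Finset.sum_mul]
        apply Finset.sum_congr rfl
        intro x _
        rw [Finset.mul_sum]
        rw [← Equiv.sum_comp (Equiv.addLeft x) (fun w => a x ^ 2 * b w ^ 2)]
        apply Finset.sum_congr rfl
        intro z _
        simp only [hc, Equiv.coe_addLeft]
        have hs := sgn_mul_self (fO n x (x + z))
        linear_combination (-(a x ^ 2 * b (x + z) ^ 2)) * hs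
    _ = ∑ x ∈ H, ∑ x' ∈ H, ∑ z : Fin n → ZMod 2, c x z * c x' z := by
        apply Finset.sum_congr rfl
        intro x hx
        rw [Finset.sum_eq_single_of_mem x hx]
        intro x' hx' hne
        exact offdiag n x x'
          (key n z0 hz0 x x' (hH x hx) (hH x' hx') (fun h => hne (h.symm))) a b
    _ = ∑ z : Fin n → ZMod 2, (∑ x ∈ H, ∑ y : Fin n → ZMod 2,
          if x + y = z then sgn (fO n x y) * a x * b y else 0) ^ 2 := by
        rw [Finset.sum_congr rfl
          (fun x (_ : x ∈ H) => Finset.sum_comm (s := H) (t := Finset.univ)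
            (f := fun x' z => c x z * c x' z)), Finset.sum_comm]
        apply Finset.sum_congr rfl
        intro z _
        have hz2 : (∑ x ∈ H, ∑ y : Fin n → ZMod 2,
            if x + y = z then sgn (fO n x y) * a x * b y else 0) = ∑ x ∈ H, c x z :=
          Finset.sum_congr rfl (fun x _ => step1 z x)
        rw [hz2, sq, Finset.sum_mul_sum]

lemma eVec_ne_add (n : ℕ) (z0 : Fin n) (hz0 : ∀ j, z0 ≤ j) (i j : Fin n) :
    eVec n i ≠ eVec n z0 + eVec n j := by
  intro h
  by_cases hj : j = z0
  · subst hj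
    rw [vec_addself] at h
    have := congrFun h i
    simp [eVec] at this
  · have hzj : ¬ z0 = j := fun hh => hj hh.symm
    have h1 := congrFun h z0
    simp only [eVec, Pi.add_apply, if_pos rfl, hzj, if_neg, not_false_iff, add_zero] at h1
    have hi : z0 = i := by
      by_contra hzi
      rw [if_neg hzi] at h1
      exact absurd h1.symm one_ne_zero
    subst hi
    have h2 := congrFun h j
    simp only [eVec, Pi.add_apply, hj, if_neg, not_false_iff, if_pos rfl, zero_add] at h2
    exact absurd h2.symm one_ne_zero

/-- For even `n ≥ 2`, the set `H = {e_i} ∪ {e_1 + e_i}` has cardinality `2n` and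
`(H, (ℤ/2ℤ)^n)` is a multiplicative pair for `f_O`. -/
theorem hurwitzian_set_even (n : ℕ) (hn2 : 2 ≤ n) (hn : n % 2 = 0) :
    ((Finset.univ.image (eVec n)) ∪
        (Finset.univ.image fun i => eVec n ⟨0, by omega⟩ + eVec n i)).card = 2 * n ∧
    IsMultiplicativePair n (fO n)
      ((Finset.univ.image (eVec n)) ∪
        (Finset.univ.image fun i => eVec n ⟨0, by omega⟩ + eVec n i))
      Finset.univ := by
  have hz0 : ∀ j : Fin n, (⟨0, by omega⟩ : Fin n) ≤ j := fun j => Fin.mk_le_mk.mpr (Nat.zero_le _)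
  have hinj1 : Function.Injective (eVec n) := fun p q h => eVec_inj n h
  have hinj2 : Function.Injective (fun i => eVec n ⟨0, by omega⟩ + eVec n i) :=
    fun p q h => eVec_inj n (add_left_cancel h)
  have hdisj : Disjoint (Finset.univ.image (eVec n))
      (Finset.univ.image fun i => eVec n ⟨0, by omega⟩ + eVec n i) := by
    rw [Finset.disjoint_left]
    intro v hA hB
    obtain ⟨i, _, rfl⟩ := Finset.mem_image.mp hA
    obtain ⟨j, _, hj⟩ := Finset.mem_image.mp hB
    exact eVec_ne_add n _ hz0 i j hj.symm
  constructor
  · rw [Finset.card_union_of_disjoint hdisj,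
      Finset.card_image_of_injective _ hinj1, Finset.card_image_of_injective _ hinj2,
      Finset.card_univ, Fintype.card_fin]
    ring
  · apply mult n _ hz0
    intro x hx
    rcases Finset.mem_union.mp hx with h | h
    · obtain ⟨i, _, rfl⟩ := Finset.mem_image.mp h
      exact Or.inl ⟨i, rfl⟩
    · obtain ⟨i, _, rfl⟩ := Finset.mem_image.mp h
      exact Or.inr ⟨i, rfl⟩
end

section
/- For every positive integer n there exists a square identity of size [2n, 2^n, 2^n] with integer coefficients; i.e., there exist integers λ(m,i,j) for 1 ≤ m ≤ 2^n, 1 ≤ i ≤ 2n, 1 ≤ j ≤ 2^n such that (a_1²+⋯+a_{2n}²)(b_1²+⋯+b_{2^n}²) = c_1²+⋯+c_{2^n}² for all real a's and b's, where c_m = Σ_{i,j} λ(m,i,j)·a_i·b_j. -/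
open Matrix Kronecker

section Defs

/-- A family of anticommuting integral "complex structure" matrices. -/
def CFam {ι n : Type} [DecidableEq ι] [Fintype n] [DecidableEq n]
    (A : ι → Matrix n n ℤ) : Prop :=
  (∀ i, (A i)ᵀ = -(A i)) ∧
  (∀ i j, A i * A j + A j * A i = if i = j then (-2 : ℤ) • 1 else 0)

/-- Existence of a family of `k` such matrices of size `N`. -/
def GoodN (N k : ℕ) : Prop :=
  ∃ A : Fin k → Matrix (Fin N) (Fin N) ℤ, CFam A

end Defs

section Kron

variable {l m n p : Type} [Fintype l] [Fintype m] [Fintype n] [Fintype p]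

theorem neg_kron (A : Matrix l m ℤ) (B : Matrix n p ℤ) :
    (-A) ⊗ₖ B = -(A ⊗ₖ B) := by
  ext ⟨i, i'⟩ ⟨j, j'⟩
  simp [Matrix.kroneckerMap_apply]

theorem kron_neg (A : Matrix l m ℤ) (B : Matrix n p ℤ) :
    A ⊗ₖ (-B) = -(A ⊗ₖ B) := by
  ext ⟨i, i'⟩ ⟨j, j'⟩
  simp [Matrix.kroneckerMap_apply]

theorem kron_transpose (A : Matrix l m ℤ) (B : Matrix n p ℤ) :
    (A ⊗ₖ B)ᵀ = Aᵀ ⊗ₖ Bᵀ :=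
  (Matrix.kroneckerMap_transpose _ A B).symm

end Kron

section Reindex

theorem CFam.compIdx {ι ι' n : Type} [DecidableEq ι] [DecidableEq ι']
    [Fintype n] [DecidableEq n] {A : ι → Matrix n n ℤ} (hA : CFam A)
    {f : ι' → ι} (hf : Function.Injective f) : CFam (A ∘ f) := by
  refine ⟨fun i => hA.1 (f i), fun i j => ?_⟩
  rw [Function.comp_apply, Function.comp_apply, hA.2 (f i) (f j)]
  simp [hf.eq_iff]

theorem CFam.reindex {ι n m : Type} [DecidableEq ι] [Fintype n] [DecidableEq n]
    [Fintype m] [DecidableEq m] {A : ι → Matrix n n ℤ} (hA : CFam A)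
    (e : n ≃ m) : CFam (fun i => (A i).submatrix e.symm e.symm) := by
  constructor
  · intro i
    show ((A i).submatrix ⇑e.symm ⇑e.symm)ᵀ = -((A i).submatrix ⇑e.symm ⇑e.symm)
    rw [transpose_submatrix, hA.1 i]
    rfl
  · intro i j
    show (A i).submatrix ⇑e.symm ⇑e.symm * (A j).submatrix ⇑e.symm ⇑e.symm
        + (A j).submatrix ⇑e.symm ⇑e.symm * (A i).submatrix ⇑e.symm ⇑e.symm = _
    rw [Matrix.submatrix_mul_equiv, Matrix.submatrix_mul_equiv,
      show (A i * A j).submatrix ⇑e.symm ⇑e.symm + (A j * A i).submatrix ⇑e.symm ⇑e.symm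
        = (A i * A j + A j * A i).submatrix ⇑e.symm ⇑e.symm from rfl, hA.2 i j]
    split
    · simp only [Matrix.submatrix_smul, Pi.smul_apply, Matrix.submatrix_one_equiv]
    · rfl

theorem GoodN.ofFam {ι n : Type} [DecidableEq ι] [Fintype ι] [Fintype n] [DecidableEq n]
    {A : ι → Matrix n n ℤ} (hA : CFam A) {N k : ℕ}
    (eι : Fin k ≃ ι) (en : n ≃ Fin N) : GoodN N k := by
  refine ⟨fun i => (A (eι i)).submatrix en.symm en.symm, ?_⟩
  exact (hA.compIdx eι.injective).reindex en

end Reindex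

section Base

def quatL : Fin 3 → Matrix (Fin 4) (Fin 4) ℤ
  | 0 => !![0, -1, 0, 0; 1, 0, 0, 0; 0, 0, 0, -1; 0, 0, 1, 0]
  | 1 => !![0, 0, -1, 0; 0, 0, 0, 1; 1, 0, 0, 0; 0, -1, 0, 0]
  | 2 => !![0, 0, 0, -1; 0, 0, -1, 0; 0, 1, 0, 0; 1, 0, 0, 0]

theorem quatL_cfam : CFam quatL := ⟨by decide, by decide⟩

def octL : Fin 7 → Matrix (Fin 8) (Fin 8) ℤ
  | 0 => !![0, -1, 0, 0, 0, 0, 0, 0;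
      1, 0, 0, 0, 0, 0, 0, 0;
      0, 0, 0, -1, 0, 0, 0, 0;
      0, 0, 1, 0, 0, 0, 0, 0;
      0, 0, 0, 0, 0, -1, 0, 0;
      0, 0, 0, 0, 1, 0, 0, 0;
      0, 0, 0, 0, 0, 0, 0, 1;
      0, 0, 0, 0, 0, 0, -1, 0]
  | 1 => !![0, 0, -1, 0, 0, 0, 0, 0;
      0, 0, 0, 1, 0, 0, 0, 0;
      1, 0, 0, 0, 0, 0, 0, 0;
      0, -1, 0, 0, 0, 0, 0, 0;
      0, 0, 0, 0, 0, 0, -1, 0;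
      0, 0, 0, 0, 0, 0, 0, -1;
      0, 0, 0, 0, 1, 0, 0, 0;
      0, 0, 0, 0, 0, 1, 0, 0]
  | 2 => !![0, 0, 0, -1, 0, 0, 0, 0;
      0, 0, -1, 0, 0, 0, 0, 0;
      0, 1, 0, 0, 0, 0, 0, 0;
      1, 0, 0, 0, 0, 0, 0, 0;
      0, 0, 0, 0, 0, 0, 0, -1;
      0, 0, 0, 0, 0, 0, 1, 0;
      0, 0, 0, 0, 0, -1, 0, 0;
      0, 0, 0, 0, 1, 0, 0, 0]
  | 3 => !![0, 0, 0, 0, -1, 0, 0, 0;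
      0, 0, 0, 0, 0, 1, 0, 0;
      0, 0, 0, 0, 0, 0, 1, 0;
      0, 0, 0, 0, 0, 0, 0, 1;
      1, 0, 0, 0, 0, 0, 0, 0;
      0, -1, 0, 0, 0, 0, 0, 0;
      0, 0, -1, 0, 0, 0, 0, 0;
      0, 0, 0, -1, 0, 0, 0, 0]
  | 4 => !![0, 0, 0, 0, 0, -1, 0, 0;
      0, 0, 0, 0, -1, 0, 0, 0;
      0, 0, 0, 0, 0, 0, 0, 1;
      0, 0, 0, 0, 0, 0, -1, 0;
      0, 1, 0, 0, 0, 0, 0, 0;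
      1, 0, 0, 0, 0, 0, 0, 0;
      0, 0, 0, 1, 0, 0, 0, 0;
      0, 0, -1, 0, 0, 0, 0, 0]
  | 5 => !![0, 0, 0, 0, 0, 0, -1, 0;
      0, 0, 0, 0, 0, 0, 0, -1;
      0, 0, 0, 0, -1, 0, 0, 0;
      0, 0, 0, 0, 0, 1, 0, 0;
      0, 0, 1, 0, 0, 0, 0, 0;
      0, 0, 0, -1, 0, 0, 0, 0;
      1, 0, 0, 0, 0, 0, 0, 0;
      0, 1, 0, 0, 0, 0, 0, 0]
  | 6 => !![0, 0, 0, 0, 0, 0, 0, -1;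
      0, 0, 0, 0, 0, 0, 1, 0;
      0, 0, 0, 0, 0, -1, 0, 0;
      0, 0, 0, 0, -1, 0, 0, 0;
      0, 0, 0, 1, 0, 0, 0, 0;
      0, 0, 1, 0, 0, 0, 0, 0;
      0, -1, 0, 0, 0, 0, 0, 0;
      1, 0, 0, 0, 0, 0, 0, 0]

theorem octL_cfam : CFam octL := ⟨by decide, by decide⟩

def P1 : Matrix (Fin 2) (Fin 2) ℤ := !![0, 1; 1, 0]
def Peps : Matrix (Fin 2) (Fin 2) ℤ := !![0, 1; -1, 0]
def P3 : Matrix (Fin 2) (Fin 2) ℤ := !![1, 0; 0, -1]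

/-- Eight anticommuting complex structures in dimension 16. -/
def Efam : Fin 8 → Matrix (Fin 2 × Fin 8) (Fin 2 × Fin 8) ℤ :=
  Fin.snoc (fun i => P1 ⊗ₖ octL i) (Peps ⊗ₖ 1)

/-- The symmetric involution anticommuting with all of `Efam`. -/
def Smat : Matrix (Fin 2 × Fin 8) (Fin 2 × Fin 8) ℤ := P3 ⊗ₖ 1

theorem P1_sq : P1 * P1 = 1 := by decide
theorem P1_t : P1ᵀ = P1 := by decide
theorem Peps_t : Pepsᵀ = -Peps := by decide
theorem Peps_sq : Peps * Peps = (-1 : ℤ) • 1 := by decide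
theorem P1_Peps : P1 * Peps + Peps * P1 = 0 := by decide
theorem P3_P1 : P3 * P1 + P1 * P3 = 0 := by decide
theorem P3_Peps : P3 * Peps + Peps * P3 = 0 := by decide

theorem Efam_cfam : CFam Efam := by
  constructor
  · intro i
    induction i using Fin.lastCases with
    | last =>
      rw [Efam, Fin.snoc_last, kron_transpose, Peps_t, Matrix.transpose_one, neg_kron]
    | cast i =>
      rw [Efam, Fin.snoc_castSucc, kron_transpose, P1_t, octL_cfam.1 i, kron_neg]
  · intro i j
    induction i using Fin.lastCases with
    | last =>
      induction j using Fin.lastCases with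
      | last =>
        rw [Efam, Fin.snoc_last, if_pos rfl, ← Matrix.mul_kronecker_mul, Peps_sq, one_mul,
          Matrix.smul_kronecker, Matrix.one_kronecker_one, ← add_smul]
        norm_num
      | cast j =>
        rw [Efam, Fin.snoc_last, Fin.snoc_castSucc,
          if_neg (by simp [Fin.ext_iff]; omega),
          ← Matrix.mul_kronecker_mul, ← Matrix.mul_kronecker_mul, one_mul, mul_one,
          ← Matrix.add_kronecker]
        rw [show Peps * P1 + P1 * Peps = 0 from by rw [add_comm]; exact P1_Peps,
          Matrix.zero_kronecker]
    | cast i =>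
      induction j using Fin.lastCases with
      | last =>
        rw [Efam, Fin.snoc_last, Fin.snoc_castSucc,
          if_neg (by simp [Fin.ext_iff]; omega),
          ← Matrix.mul_kronecker_mul, ← Matrix.mul_kronecker_mul, one_mul, mul_one,
          ← Matrix.add_kronecker, P1_Peps, Matrix.zero_kronecker]
      | cast j =>
        rw [Efam, Fin.snoc_castSucc, Fin.snoc_castSucc,
          ← Matrix.mul_kronecker_mul, ← Matrix.mul_kronecker_mul, P1_sq,
          ← Matrix.kronecker_add, octL_cfam.2 i j]
        by_cases h : i = j
        · rw [if_pos h, if_pos (by rw [h]), Matrix.kronecker_smul,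
            Matrix.one_kronecker_one]
        · rw [if_neg h, if_neg fun hc => h (Fin.castSucc_inj.mp hc),
            Matrix.kronecker_zero]

theorem Smat_t : Smatᵀ = Smat := by decide

theorem Smat_sq : Smat * Smat = 1 := by decide

theorem Smat_anti (a : Fin 8) : Smat * Efam a + Efam a * Smat = 0 := by
  induction a using Fin.lastCases with
  | last =>
    rw [Efam, Fin.snoc_last, Smat, ← Matrix.mul_kronecker_mul, ← Matrix.mul_kronecker_mul,
      one_mul, ← Matrix.add_kronecker, P3_Peps, Matrix.zero_kronecker]
  | cast i =>
    rw [Efam, Fin.snoc_castSucc, Smat, ← Matrix.mul_kronecker_mul, ← Matrix.mul_kronecker_mul,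
      one_mul, mul_one, ← Matrix.add_kronecker, P3_P1, Matrix.zero_kronecker]

end Base

section Step

theorem GoodN.step {N k : ℕ} (h : GoodN N k) : GoodN (16 * N) (k + 8) := by
  obtain ⟨A, hA⟩ := h
  set B : Fin 8 ⊕ Fin k → Matrix ((Fin 2 × Fin 8) × Fin N) ((Fin 2 × Fin 8) × Fin N) ℤ :=
    Sum.elim (fun a => Efam a ⊗ₖ 1) (fun j => Smat ⊗ₖ A j) with hBdef
  have hB : CFam B := by
    constructor
    · rintro (a | j)
      · show (Efam a ⊗ₖ 1)ᵀ = -(Efam a ⊗ₖ 1)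
        rw [kron_transpose, Matrix.transpose_one, Efam_cfam.1 a, neg_kron]
      · show (Smat ⊗ₖ A j)ᵀ = -(Smat ⊗ₖ A j)
        rw [kron_transpose, Smat_t, hA.1 j, kron_neg]
    · rintro (a | j) (b | l)
      · show Efam a ⊗ₖ 1 * Efam b ⊗ₖ 1 + Efam b ⊗ₖ 1 * Efam a ⊗ₖ 1 = _
        rw [← Matrix.mul_kronecker_mul, ← Matrix.mul_kronecker_mul, one_mul,
          ← Matrix.add_kronecker, Efam_cfam.2 a b]
        by_cases h : a = b
        · rw [if_pos h, if_pos (by rw [h]), Matrix.smul_kronecker,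
            Matrix.one_kronecker_one]
        · rw [if_neg h, if_neg fun hc => h (Sum.inl.inj hc), Matrix.zero_kronecker]
      · show Efam a ⊗ₖ 1 * Smat ⊗ₖ A l + Smat ⊗ₖ A l * Efam a ⊗ₖ 1 = _
        rw [if_neg (by simp), ← Matrix.mul_kronecker_mul, ← Matrix.mul_kronecker_mul,
          one_mul, mul_one, ← Matrix.add_kronecker,
          show Efam a * Smat + Smat * Efam a = 0 from by rw [add_comm]; exact Smat_anti a,
          Matrix.zero_kronecker]
      · show Smat ⊗ₖ A j * Efam b ⊗ₖ 1 + Efam b ⊗ₖ 1 * Smat ⊗ₖ A j = _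
        rw [if_neg (by simp), ← Matrix.mul_kronecker_mul, ← Matrix.mul_kronecker_mul,
          one_mul, mul_one, ← Matrix.add_kronecker, Smat_anti b, Matrix.zero_kronecker]
      · show Smat ⊗ₖ A j * Smat ⊗ₖ A l + Smat ⊗ₖ A l * Smat ⊗ₖ A j = _
        rw [← Matrix.mul_kronecker_mul, ← Matrix.mul_kronecker_mul, Smat_sq,
          ← Matrix.kronecker_add, hA.2 j l]
        by_cases h : j = l
        · rw [if_pos h, if_pos (by rw [h]), Matrix.kronecker_smul,
            Matrix.one_kronecker_one]
        · rw [if_neg h, if_neg fun hc => h (Sum.inr.inj hc), Matrix.kronecker_zero]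
  refine GoodN.ofFam hB ((finCongr (by omega : k + 8 = 8 + k)).trans finSumFinEquiv.symm)
    (((finProdFinEquiv.trans (finCongr (by norm_num : 2 * 8 = 16))).prodCongr
      (Equiv.refl (Fin N))).trans finProdFinEquiv)

end Step

section Counting

theorem good (n : ℕ) (hn : 1 ≤ n) : GoodN (2 ^ n) (2 * n - 1) := by
  induction n using Nat.strong_induction_on with
  | _ n ih =>
    rcases lt_or_ge n 5 with h5 | h5
    · interval_cases n
      · exact ⟨fun _ => Peps, by decide, by decide⟩
      · exact ⟨quatL, quatL_cfam⟩
      · exact ⟨octL ∘ Fin.castLE (by norm_num),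
          octL_cfam.compIdx (Fin.castLE_injective _)⟩
      · exact GoodN.ofFam
          (Efam_cfam.compIdx (Fin.castLE_injective (by norm_num : 7 ≤ 8)))
          (Equiv.refl _) (finProdFinEquiv.trans (finCongr (by norm_num : 2 * 8 = 16)))
    · obtain ⟨m, rfl⟩ : ∃ m, n = m + 4 := ⟨n - 4, by omega⟩
      have h := ih m (by omega) (by omega)
      have e1 : 2 ^ (m + 4) = 16 * 2 ^ m := by rw [pow_add]; ring
      have e2 : 2 * (m + 4) - 1 = (2 * m - 1) + 8 := by omega
      rw [e1, e2]
      exact h.step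

end Counting


/-- A square identity of size `[r, s, N]`: there exist integer coefficients
`lam m i j` such that `(a₁²+⋯+a_r²)(b₁²+⋯+b_s²) = c₁²+⋯+c_N²` for all real
`a`'s and `b`'s, where `c_m = Σ_{i,j} lam m i j · a_i · b_j`. -/
def IsSquareIdentity (r s N : ℕ) : Prop :=
  ∃ lam : Fin N → Fin r → Fin s → ℤ,
    ∀ (a : Fin r → ℝ) (b : Fin s → ℝ),
      (∑ i, a i ^ 2) * (∑ j, b j ^ 2) =
        ∑ m, (∑ i, ∑ j, (lam m i j : ℝ) * a i * b j) ^ 2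

theorem exists_orth_fam (n : ℕ) (hn : 0 < n)
    (A : Fin (2 * n - 1) → Matrix (Fin (2 ^ n)) (Fin (2 ^ n)) ℤ)
    (hA : CFam A) :
    ∃ M : Fin (2 * n) → Matrix (Fin (2 ^ n)) (Fin (2 ^ n)) ℤ,
      ∀ i j, (M i)ᵀ * M j + (M j)ᵀ * M i = if i = j then (2 : ℤ) • 1 else 0 := by
  refine ⟨fun i => if h : (i : ℕ) = 0 then 1
    else A ⟨(i : ℕ) - 1, by have := i.isLt; omega⟩, fun i j => ?_⟩
  dsimp only
  by_cases hi : (i : ℕ) = 0 <;> by_cases hj : (j : ℕ) = 0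
  · have hij : i = j := Fin.ext (by omega)
    rw [dif_pos hi, dif_pos hj, if_pos hij]
    simp [two_smul]
  · have hij : i ≠ j := fun hEq => hj (by rw [← hEq]; exact hi)
    rw [dif_pos hi, dif_neg hj, if_neg hij]
    simp [hA.1]
  · have hij : i ≠ j := fun hEq => hi (by rw [hEq]; exact hj)
    rw [dif_neg hi, dif_pos hj, if_neg hij]
    simp [hA.1]
  · rw [dif_neg hi, dif_neg hj, hA.1, hA.1, neg_mul, neg_mul, ← neg_add, hA.2]
    by_cases hij : i = j
    · rw [if_pos (by rw [hij]), if_pos hij, neg_smul, neg_neg]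
    · rw [if_neg (fun hc => hij (Fin.ext (by
        simp only [Fin.mk.injEq] at hc; omega))), if_neg hij, neg_zero]

theorem isSquareIdentity_of_fam {r N : ℕ} (M : Fin r → Matrix (Fin N) (Fin N) ℤ)
    (hM : ∀ i j, (M i)ᵀ * M j + (M j)ᵀ * M i
      = if i = j then (2 : ℤ) • 1 else 0) :
    IsSquareIdentity r N N := by
  refine ⟨fun m i j => M i m j, fun a b => ?_⟩
  set W : Fin r → Matrix (Fin N) (Fin N) ℝ :=
    fun i => (M i).map (Int.cast : ℤ → ℝ) with hWdef
  have hmap : ∀ X Y : Matrix (Fin N) (Fin N) ℤ,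
      (X * Y).map (Int.cast : ℤ → ℝ)
        = X.map (Int.cast : ℤ → ℝ) * Y.map (Int.cast : ℤ → ℝ) := by
    intro X Y
    exact Matrix.map_mul (f := Int.castRingHom ℝ)
  have h21 : ((2 : ℤ) • (1 : Matrix (Fin N) (Fin N) ℤ)).map (Int.cast : ℤ → ℝ)
      = (2 : ℝ) • 1 := by
    ext p q
    rw [Matrix.map_apply, Matrix.smul_apply, Matrix.smul_apply, Matrix.one_apply,
      Matrix.one_apply]
    by_cases hpq : p = q <;> simp [hpq]
  have hWrel : ∀ i j, (W i)ᵀ * W j + (W j)ᵀ * W i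
      = if i = j then (2 : ℝ) • (1 : Matrix (Fin N) (Fin N) ℝ) else 0 := by
    intro i j
    have h := congrArg (Int.castRingHom ℝ).mapMatrix (hM i j)
    rw [map_add, _root_.map_mul, _root_.map_mul, apply_ite (Int.castRingHom ℝ).mapMatrix,
      map_zero] at h
    simp only [RingHom.mapMatrix_apply, Int.coe_castRingHom] at h
    rw [Matrix.transpose_map, Matrix.transpose_map, h21] at h
    exact h
  set Wa : Matrix (Fin N) (Fin N) ℝ := ∑ i, a i • W i with hWa
  have expand1 : Waᵀ * Wa = ∑ i, ∑ j, (a i * a j) • ((W i)ᵀ * W j) := by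
    rw [hWa, Matrix.transpose_sum, Finset.sum_mul_sum]
    refine Finset.sum_congr rfl fun i _ => Finset.sum_congr rfl fun j _ => ?_
    rw [Matrix.transpose_smul, smul_mul_assoc, mul_smul_comm, smul_smul]
  have expand2 : Waᵀ * Wa = ∑ i, ∑ j, (a i * a j) • ((W j)ᵀ * W i) := by
    rw [expand1, Finset.sum_comm]
    refine Finset.sum_congr rfl fun i _ => Finset.sum_congr rfl fun j _ => ?_
    rw [mul_comm]
  have hprod : Waᵀ * Wa = (∑ i, a i ^ 2) • 1 := by
    refine smul_right_injective (Matrix (Fin N) (Fin N) ℝ)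
      (two_ne_zero (α := ℝ)) ?_
    calc (2 : ℝ) • (Waᵀ * Wa) = (Waᵀ * Wa) + (Waᵀ * Wa) := two_smul ℝ _
      _ = ∑ i, ∑ j, (a i * a j) • ((W i)ᵀ * W j + (W j)ᵀ * W i) := by
          nth_rewrite 2 [expand2]
          rw [expand1, ← Finset.sum_add_distrib]
          refine Finset.sum_congr rfl fun i _ => ?_
          rw [← Finset.sum_add_distrib]
          exact Finset.sum_congr rfl fun j _ => (smul_add _ _ _).symm
      _ = ∑ i, ∑ j, (if i = j
            then (a i * a j) • ((2:ℝ) • (1 : Matrix (Fin N) (Fin N) ℝ))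
            else 0) := by
          refine Finset.sum_congr rfl fun i _ => Finset.sum_congr rfl fun j _ => ?_
          rw [hWrel i j]
          split <;> simp
      _ = ∑ i, (a i * a i) • ((2:ℝ) • (1 : Matrix (Fin N) (Fin N) ℝ)) := by
          refine Finset.sum_congr rfl fun i _ => ?_
          rw [Finset.sum_ite_eq _ i
            (fun j => (a i * a j) • ((2:ℝ) • (1 : Matrix (Fin N) (Fin N) ℝ)))]
          simp
      _ = (2 : ℝ) • ((∑ i, a i ^ 2) • 1) := by
          rw [Finset.sum_congr rfl fun (i : Fin r) _ =>
            show (a i * a i) • ((2:ℝ) • (1 : Matrix (Fin N) (Fin N) ℝ))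
              = (2:ℝ) • ((a i ^ 2) • 1) from by rw [smul_comm, sq],
            ← Finset.smul_sum, ← Finset.sum_smul]
  have hc : ∀ m, (∑ i, ∑ j, ((M i m j : ℤ) : ℝ) * a i * b j) = (Wa *ᵥ b) m := by
    intro m
    rw [Finset.sum_comm]
    rw [show (Wa *ᵥ b) m = ∑ j, Wa m j * b j from rfl]
    refine Finset.sum_congr rfl fun j _ => ?_
    rw [hWa, Matrix.sum_apply, Finset.sum_mul]
    refine Finset.sum_congr rfl fun i _ => ?_
    rw [Matrix.smul_apply, hWdef]
    show ((M i m j : ℤ) : ℝ) * a i * b j = a i * (M i).map (Int.cast : ℤ → ℝ) m j * b j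
    rw [Matrix.map_apply]
    ring
  have key : ∑ m, ((Wa *ᵥ b) m) ^ 2 = (∑ i, a i ^ 2) * (∑ j, b j ^ 2) := by
    have h1 : ∑ m, ((Wa *ᵥ b) m) ^ 2 = (Wa *ᵥ b) ⬝ᵥ (Wa *ᵥ b) := by
      simp [dotProduct, sq]
    rw [h1, Matrix.dotProduct_mulVec, ← Matrix.mulVec_transpose,
      Matrix.mulVec_mulVec, hprod, Matrix.smul_mulVec, Matrix.one_mulVec,
      smul_dotProduct]
    rw [show b ⬝ᵥ b = ∑ j, b j ^ 2 from by simp [dotProduct, sq]]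
    rw [smul_eq_mul]
  have hsq : ∀ m : Fin N,
      (∑ i, ∑ j, ((M i m j : ℤ) : ℝ) * a i * b j) ^ 2 = ((Wa *ᵥ b) m) ^ 2 :=
    fun m => by rw [hc m]
  rw [Finset.sum_congr rfl fun m _ => hsq m]
  exact key.symm

/-- For every positive integer `n` there is a square identity of size
`[2n, 2^n, 2^n]`. -/
theorem square_identity_two_n (n : ℕ) (hn : 0 < n) :
    IsSquareIdentity (2 * n) (2 ^ n) (2 ^ n) := by
  obtain ⟨A, hA⟩ := good n hn
  obtain ⟨M, hM⟩ := exists_orth_fam n hn A hA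
  exact isSquareIdentity_of_fam M hM
end

section
/- For every odd positive integer n there exists a square identity of size [2n, 2^n − 2·(n + C(n,3)), 2^n − 2·C(n,2) − 2], where C(·,·) denotes the binomial coefficient. -/
open Finset Complex

variable {n : ℕ}


def tog (i : Fin n) (S : Finset (Fin n)) : Finset (Fin n) :=
  if i ∈ S then S.erase i else insert i S

lemma tog_tog (i : Fin n) (S : Finset (Fin n)) : tog i (tog i S) = S := by
  unfold tog
  by_cases h : i ∈ S
  · simp [h, Finset.insert_erase h]
  · simp [h, Finset.erase_insert h]

lemma mem_tog_self (i : Fin n) (S : Finset (Fin n)) : i ∈ tog i S ↔ i ∉ S := by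
  unfold tog; by_cases h : i ∈ S <;> simp [h]

lemma mem_tog_ne {i j : Fin n} (h : j ≠ i) (S : Finset (Fin n)) :
    j ∈ tog i S ↔ j ∈ S := by
  unfold tog; by_cases hi : i ∈ S <;> simp [hi, h]

lemma tog_comm {i j : Fin n} (h : i ≠ j) (S : Finset (Fin n)) :
    tog i (tog j S) = tog j (tog i S) := by
  ext x
  by_cases hxi : x = i
  · subst hxi
    rw [mem_tog_self, mem_tog_ne h, mem_tog_ne h, mem_tog_self]
  · by_cases hxj : x = j
    · subst hxj
      rw [mem_tog_ne (Ne.symm h), mem_tog_self, mem_tog_self, mem_tog_ne (Ne.symm h)]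
    · rw [mem_tog_ne hxi, mem_tog_ne hxj, mem_tog_ne hxj, mem_tog_ne hxi]

lemma tog_card_mem {i : Fin n} {S : Finset (Fin n)} (h : i ∈ S) :
    (tog i S).card + 1 = S.card := by
  unfold tog
  rw [if_pos h, Finset.card_erase_of_mem h]
  have := Finset.card_pos.2 ⟨i, h⟩
  omega

lemma tog_card_not_mem {i : Fin n} {S : Finset (Fin n)} (h : i ∉ S) :
    (tog i S).card = S.card + 1 := by
  unfold tog
  rw [if_neg h, Finset.card_insert_of_notMem h]

lemma tog_card_le (i : Fin n) (S : Finset (Fin n)) :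
    (tog i S).card ≤ S.card + 1 := by
  by_cases h : i ∈ S
  · have := tog_card_mem h; omega
  · rw [tog_card_not_mem h]

lemma tog_card_parity (i : Fin n) (S : Finset (Fin n)) :
    (tog i S).card % 2 ≠ S.card % 2 := by
  by_cases h : i ∈ S
  · have := tog_card_mem h; omega
  · have := tog_card_not_mem h; omega

def eps (i : Fin n) (S : Finset (Fin n)) : ℤ :=
  ∏ x ∈ S, if x < i then -1 else 1

lemma eps_mul_self (i : Fin n) (S : Finset (Fin n)) : eps i S * eps i S = 1 := by
  unfold eps
  rw [← Finset.prod_mul_distrib]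
  apply Finset.prod_eq_one
  intro x _
  by_cases h : x < i <;> simp [h]

lemma eps_tog (i j : Fin n) (S : Finset (Fin n)) :
    eps i (tog j S) = (if j < i then -1 else 1) * eps i S := by
  have hcc : (if j < i then (-1:ℤ) else 1) * (if j < i then (-1:ℤ) else 1) = 1 := by
    by_cases hj : j < i <;> simp [hj]
  unfold tog
  by_cases h : j ∈ S
  · rw [if_pos h]
    have h1 : eps i S = (if j < i then (-1:ℤ) else 1) * eps i (S.erase j) :=
      (Finset.mul_prod_erase S (fun x => if x < i then (-1:ℤ) else 1) h).symm
    rw [h1, ← mul_assoc, hcc, one_mul]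
  · rw [if_neg h]
    unfold eps
    rw [Finset.prod_insert h]

lemma eps_tog_self (i : Fin n) (S : Finset (Fin n)) :
    eps i (tog i S) = eps i S := by
  rw [eps_tog, if_neg (lt_irrefl i), one_mul]

lemma eps_key {i j : Fin n} (h : i ≠ j) (S : Finset (Fin n)) :
    eps i S * eps j (tog j (tog i S)) + eps j S * eps i (tog j (tog i S)) = 0 := by
  rw [show tog j (tog i S) = tog i (tog j S) from (tog_comm h S).symm]
  rw [eps_tog j i, eps_tog_self j, eps_tog_self i, eps_tog i j]
  have hij : (if i < j then (-1:ℤ) else 1) = - (if j < i then (-1:ℤ) else 1) := by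
    rcases lt_or_gt_of_ne h with h1 | h1
    · rw [if_pos h1, if_neg (asymm h1)]
    · rw [if_neg (asymm h1), if_pos h1]; norm_num
  rw [hij]; ring

def Eset (n : ℕ) : Finset (Finset (Fin n)) :=
  univ.filter fun S => S.card % 2 = 0 ∧ S.card + 5 ≤ n

def Fset (n : ℕ) : Finset (Finset (Fin n)) :=
  univ.filter fun T => T.card % 2 = 1 ∧ T.card + 4 ≤ n

def Aset (n : ℕ) (T : Finset (Fin n)) : Finset (Fin n) :=
  univ.filter fun i => tog i T ∈ Eset n

lemma mem_Eset {S : Finset (Fin n)} :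
    S ∈ Eset n ↔ S.card % 2 = 0 ∧ S.card + 5 ≤ n := by
  simp [Eset]

lemma mem_Fset {T : Finset (Fin n)} :
    T ∈ Fset n ↔ T.card % 2 = 1 ∧ T.card + 4 ≤ n := by
  simp [Fset]

lemma mem_Aset {T : Finset (Fin n)} {i : Fin n} :
    i ∈ Aset n T ↔ tog i T ∈ Eset n := by
  simp [Aset]

noncomputable def trm (z : Fin n → ℂ) (w : Finset (Fin n) → ℂ)
    (T : Finset (Fin n)) (i : Fin n) : ℂ :=
  (eps i (tog i T) : ℂ) * (if i ∈ T then z i else (starRingEnd ℂ) (z i)) * w (tog i T)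

noncomputable def cC (z : Fin n → ℂ) (w : Finset (Fin n) → ℂ)
    (T : Finset (Fin n)) : ℂ :=
  ∑ i ∈ Aset n T, trm z w T i

/-- membership transfer: if `tog i T ∈ Eset` and `T ∈ Fset` etc. -/
lemma tog_mem_Fset {S : Finset (Fin n)} (hS : S ∈ Eset n) (i : Fin n) :
    tog i S ∈ Fset n := by
  rw [mem_Eset] at hS
  rw [mem_Fset]
  have h1 := tog_card_le i S
  have h2 := tog_card_parity i S
  omega

lemma tog_mem_Eset {T : Finset (Fin n)} {S : Finset (Fin n)} (hT : T ∈ Fset n)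
    (hc : S.card + 5 ≤ n) (i : Fin n) (hS : S = tog i T) : S ∈ Eset n := by
  rw [mem_Fset] at hT
  rw [mem_Eset]
  have h2 := tog_card_parity i T
  rw [← hS] at h2
  omega

lemma diag_term (z : Fin n → ℂ) (w : Finset (Fin n) → ℂ) (T : Finset (Fin n)) (i : Fin n) :
    trm z w T i * (starRingEnd ℂ) (trm z w T i) =
      (z i * (starRingEnd ℂ) (z i)) * (w (tog i T) * (starRingEnd ℂ) (w (tog i T))) := by
  have hc : ((eps i (tog i T) : ℂ)) * ((eps i (tog i T) : ℂ)) = 1 := by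
    exact_mod_cast congrArg (fun m : ℤ => (m : ℂ)) (eps_mul_self i (tog i T))
  unfold trm
  by_cases h : i ∈ T <;>
    simp only [if_pos, if_neg, h, if_true, if_false, map_mul, Complex.conj_conj,
      map_intCast] <;>
    linear_combination (z i * (starRingEnd ℂ) (z i) * (w (tog i T) *
      (starRingEnd ℂ) (w (tog i T)))) * hc

lemma offdiag_zero (z : Fin n → ℂ) (w : Finset (Fin n) → ℂ) :
    ∑ x ∈ (Fset n).sigma (fun T => (Aset n T).sigma (fun i => (Aset n T).erase i)),
      trm z w x.1 x.2.1 * (starRingEnd ℂ) (trm z w x.1 x.2.2) = 0 := by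
  refine Finset.sum_involution
    (fun x _ => (⟨tog x.2.1 (tog x.2.2 x.1), ⟨x.2.2, x.2.1⟩⟩ :
      Σ _ : Finset (Fin n), Σ _ : Fin n, Fin n)) ?_ ?_ ?_ ?_
  · -- f a + f (g a) = 0
    rintro ⟨T, i, j⟩ hx
    simp only [Finset.mem_sigma, Finset.mem_erase] at hx
    obtain ⟨hT, hiA, hji, hjA⟩ := hx
    have hij : i ≠ j := Ne.symm hji
    -- abbreviations
    set S := tog i T with hSdef
    set S' := tog j T with hS'def
    -- rewrites for the partner term
    have e1 : tog j (tog i (tog j T)) = S := by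
      rw [tog_comm hji, tog_tog]
    have e2 : tog i (tog i (tog j T)) = S' := by
      rw [tog_tog]
    have m1 : (j ∈ tog i (tog j T)) ↔ j ∉ T := by
      rw [mem_tog_ne hji, mem_tog_self]
    have m2 : (i ∈ tog i (tog j T)) ↔ i ∉ T := by
      rw [mem_tog_self, mem_tog_ne hij]
    have hkey : eps i S * eps j S' + eps j S * eps i S' = 0 := by
      have h0 := eps_key hij S
      have h1 : tog i S = T := by rw [hSdef, tog_tog]
      rw [h1] at h0
      rw [← hS'def] at h0
      exact h0
    have hkeyC : ((eps i S : ℂ)) * ((eps j S' : ℂ)) + ((eps j S : ℂ)) * ((eps i S' : ℂ)) = 0 := by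
      exact_mod_cast congrArg (fun m : ℤ => (m : ℂ)) hkey
    rw [← hS'def] at e1 e2 m1 m2
    simp only [trm, e1, e2]
    by_cases hiT : i ∈ T <;> by_cases hjT : j ∈ T <;>
      simp only [m1, m2, hiT, hjT, if_true, if_false, not_true, not_false_iff,
        ite_true, ite_false, map_mul, map_intCast, Complex.conj_conj]
    · linear_combination (z i * (starRingEnd ℂ) (z j) * w S * (starRingEnd ℂ) (w S')) * hkeyC
    · linear_combination (z i * z j * w S * (starRingEnd ℂ) (w S')) * hkeyC
    · linear_combination ((starRingEnd ℂ) (z i) * (starRingEnd ℂ) (z j) * w S *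
        (starRingEnd ℂ) (w S')) * hkeyC
    · linear_combination ((starRingEnd ℂ) (z i) * z j * w S * (starRingEnd ℂ) (w S')) * hkeyC
  ·
    rintro ⟨T, i, j⟩ hx _
    simp only [Finset.mem_sigma, Finset.mem_erase] at hx
    intro hcontra
    have : j = i := congrArg (fun y => y.2.1) hcontra
    exact hx.2.2.1 this
  ·
    rintro ⟨T, i, j⟩ hx
    simp only [Finset.mem_sigma, Finset.mem_erase] at hx ⊢
    obtain ⟨hT, hiA, hji, hjA⟩ := hx
    have hij : i ≠ j := Ne.symm hji
    rw [mem_Aset] at hiA hjA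
    have hS'E := hjA
    have hSE := hiA
    rw [mem_Eset] at hS'E
    refine ⟨?_, ?_, hij, ?_⟩
    · -- tog i (tog j T) ∈ Fset n
      rw [mem_Fset]
      have h1 := tog_card_le i (tog j T)
      have h2 := tog_card_parity i (tog j T)
      rw [mem_Fset] at hT
      omega
    · rw [mem_Aset, tog_comm hji, tog_tog]; exact hiA
    · rw [mem_Aset, tog_tog]; exact hjA
  ·
    rintro ⟨T, i, j⟩ hx
    show (⟨tog j (tog i (tog i (tog j T))), i, j⟩ :
      Σ _ : Finset (Fin n), Σ _ : Fin n, Fin n) = ⟨T, i, j⟩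
    rw [tog_tog, tog_tog]

lemma master (z : Fin n → ℂ) (w : Finset (Fin n) → ℂ) :
    (∑ i, z i * (starRingEnd ℂ) (z i)) * (∑ S ∈ Eset n, w S * (starRingEnd ℂ) (w S)) =
      ∑ T ∈ Fset n, cC z w T * (starRingEnd ℂ) (cC z w T) := by
  have expand : ∀ T, cC z w T * (starRingEnd ℂ) (cC z w T) =
      ∑ i ∈ Aset n T, (trm z w T i * (starRingEnd ℂ) (trm z w T i) +
        ∑ j ∈ (Aset n T).erase i, trm z w T i * (starRingEnd ℂ) (trm z w T j)) := by
    intro T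
    rw [cC, map_sum, Finset.sum_mul_sum]
    refine Finset.sum_congr rfl fun i hi => ?_
    rw [Finset.add_sum_erase _ (fun j => trm z w T i * (starRingEnd ℂ) (trm z w T j)) hi]
  calc (∑ i, z i * (starRingEnd ℂ) (z i)) * (∑ S ∈ Eset n, w S * (starRingEnd ℂ) (w S))
      = ∑ T ∈ Fset n, ∑ i ∈ Aset n T,
          trm z w T i * (starRingEnd ℂ) (trm z w T i) := by
        rw [Finset.sum_mul_sum, ← Finset.sum_sigma (univ : Finset (Fin n)) (fun _ => Eset n)
          (fun x => z x.1 * (starRingEnd ℂ) (z x.1) * (w x.2 * (starRingEnd ℂ) (w x.2))),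
          ← Finset.sum_sigma (Fset n) (Aset n)
          (fun x => trm z w x.1 x.2 * (starRingEnd ℂ) (trm z w x.1 x.2))]
        refine Finset.sum_nbij' (fun y => (⟨tog y.1 y.2, y.1⟩ : Σ _ : Finset (Fin n), Fin n))
          (fun x => (⟨x.2, tog x.2 x.1⟩ : Σ _ : Fin n, Finset (Fin n))) ?_ ?_ ?_ ?_ ?_
        · rintro ⟨i, S⟩ hy
          rw [Finset.mem_sigma] at hy ⊢
          refine ⟨tog_mem_Fset hy.2 i, ?_⟩
          rw [mem_Aset, tog_tog]
          exact hy.2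
        · rintro ⟨T, i⟩ hx
          rw [Finset.mem_sigma] at hx ⊢
          exact ⟨Finset.mem_univ _, mem_Aset.1 hx.2⟩
        · rintro ⟨i, S⟩ _; simp [tog_tog]
        · rintro ⟨T, i⟩ _; simp [tog_tog]
        · rintro ⟨i, S⟩ _
          simp only []
          rw [diag_term, tog_tog]
    _ = ∑ T ∈ Fset n, cC z w T * (starRingEnd ℂ) (cC z w T) := by
        rw [Finset.sum_congr rfl (fun T _ => expand T)]
        rw [← sub_eq_zero]
        have hsplit : ∀ T ∈ Fset n, ∑ i ∈ Aset n T, (trm z w T i * (starRingEnd ℂ) (trm z w T i) +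
            ∑ j ∈ (Aset n T).erase i, trm z w T i * (starRingEnd ℂ) (trm z w T j)) =
            (∑ i ∈ Aset n T, trm z w T i * (starRingEnd ℂ) (trm z w T i)) +
            ∑ i ∈ Aset n T, ∑ j ∈ (Aset n T).erase i,
              trm z w T i * (starRingEnd ℂ) (trm z w T j) := fun T _ => Finset.sum_add_distrib
        rw [Finset.sum_congr rfl hsplit, Finset.sum_add_distrib]
        have hoff : ∑ T ∈ Fset n, ∑ i ∈ Aset n T, ∑ j ∈ (Aset n T).erase i,
            trm z w T i * (starRingEnd ℂ) (trm z w T j) = 0 := by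
          have h0 := offdiag_zero z w
          simp only [Finset.sum_sigma] at h0
          exact h0
        rw [hoff]; ring


lemma card_even_odd (hn : 1 ≤ n) :
    (univ.filter fun S : Finset (Fin n) => S.card % 2 = 0).card = 2^(n-1) ∧
    (univ.filter fun S : Finset (Fin n) => ¬(S.card % 2 = 0)).card = 2^(n-1) := by
  set i0 : Fin n := ⟨0, hn⟩
  have hbij : (univ.filter fun S : Finset (Fin n) => S.card % 2 = 0).card =
      (univ.filter fun S : Finset (Fin n) => ¬(S.card % 2 = 0)).card := by
    apply Finset.card_nbij' (fun S => tog i0 S) (fun S => tog i0 S)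
    · intro S hS
      simp only [Finset.mem_coe, Finset.mem_filter, Finset.mem_univ, true_and] at hS ⊢
      have := tog_card_parity i0 S
      omega
    · intro S hS
      simp only [Finset.mem_coe, Finset.mem_filter, Finset.mem_univ, true_and] at hS ⊢
      have := tog_card_parity i0 S
      omega
    · intro S _; exact tog_tog i0 S
    · intro S _; exact tog_tog i0 S
  have htot := Finset.card_filter_add_card_filter_not
    (s := (univ : Finset (Finset (Fin n)))) (fun S => S.card % 2 = 0)
  rw [Finset.card_univ, Fintype.card_finset, Fintype.card_fin] at htot
  have h2 : 2^n = 2 * 2^(n-1) := by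
    conv_lhs => rw [← Nat.sub_add_cancel hn]
    rw [pow_succ]
    ring
  constructor <;> omega

lemma card_big_even (hn : n % 2 = 1) :
    (univ.filter fun S : Finset (Fin n) => S.card % 2 = 0 ∧ ¬(S.card + 5 ≤ n)).card =
      n + n.choose 3 := by
  have hstep : (univ.filter fun S : Finset (Fin n) => S.card % 2 = 0 ∧ ¬(S.card + 5 ≤ n)).card =
      (univ.filter fun S : Finset (Fin n) => S.card = 1 ∨ S.card = 3).card := by
    apply Finset.card_nbij' (fun S => Sᶜ) (fun S => Sᶜ)
    · intro S hS
      simp only [Finset.mem_coe, Finset.mem_filter, Finset.mem_univ, true_and] at hS ⊢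
      have h1 : Sᶜ.card = n - S.card := by
        rw [Finset.card_compl, Fintype.card_fin]
      have h2 : S.card ≤ n := by simpa using Finset.card_le_univ S
      omega
    · intro S hS
      simp only [Finset.mem_coe, Finset.mem_filter, Finset.mem_univ, true_and] at hS ⊢
      have h1 : Sᶜ.card = n - S.card := by
        rw [Finset.card_compl, Fintype.card_fin]
      have h2 : S.card ≤ n := by simpa using Finset.card_le_univ S
      omega
    · intro S _; exact compl_compl S
    · intro S _; exact compl_compl S
  rw [hstep, Finset.filter_or, Finset.card_union_of_disjoint]
  · have h1 : (univ.filter fun S : Finset (Fin n) => S.card = 1) = Finset.powersetCard 1 univ := by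
      rw [Finset.powersetCard_eq_filter, Finset.powerset_univ]
    have h3 : (univ.filter fun S : Finset (Fin n) => S.card = 3) = Finset.powersetCard 3 univ := by
      rw [Finset.powersetCard_eq_filter, Finset.powerset_univ]
    rw [h1, h3, Finset.card_powersetCard, Finset.card_powersetCard, Finset.card_univ,
      Fintype.card_fin, Nat.choose_one_right]
  · rw [Finset.disjoint_left]
    intro S h1 h3
    simp only [Finset.mem_filter] at h1 h3
    omega

lemma card_big_odd (hn : n % 2 = 1) :
    (univ.filter fun S : Finset (Fin n) => S.card % 2 = 1 ∧ ¬(S.card + 4 ≤ n)).card =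
      1 + n.choose 2 := by
  have hstep : (univ.filter fun S : Finset (Fin n) => S.card % 2 = 1 ∧ ¬(S.card + 4 ≤ n)).card =
      (univ.filter fun S : Finset (Fin n) => S.card = 0 ∨ S.card = 2).card := by
    apply Finset.card_nbij' (fun S => Sᶜ) (fun S => Sᶜ)
    · intro S hS
      simp only [Finset.mem_coe, Finset.mem_filter, Finset.mem_univ, true_and] at hS ⊢
      have h1 : Sᶜ.card = n - S.card := by
        rw [Finset.card_compl, Fintype.card_fin]
      have h2 : S.card ≤ n := by simpa using Finset.card_le_univ S
      omega
    · intro S hS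
      simp only [Finset.mem_coe, Finset.mem_filter, Finset.mem_univ, true_and] at hS ⊢
      have h1 : Sᶜ.card = n - S.card := by
        rw [Finset.card_compl, Fintype.card_fin]
      have h2 : S.card ≤ n := by simpa using Finset.card_le_univ S
      omega
    · intro S _; exact compl_compl S
    · intro S _; exact compl_compl S
  rw [hstep, Finset.filter_or, Finset.card_union_of_disjoint]
  · have h1 : (univ.filter fun S : Finset (Fin n) => S.card = 0) = Finset.powersetCard 0 univ := by
      rw [Finset.powersetCard_eq_filter, Finset.powerset_univ]
    have h3 : (univ.filter fun S : Finset (Fin n) => S.card = 2) = Finset.powersetCard 2 univ := by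
      rw [Finset.powersetCard_eq_filter, Finset.powerset_univ]
    rw [h1, h3, Finset.card_powersetCard, Finset.card_powersetCard, Finset.card_univ,
      Fintype.card_fin, Nat.choose_zero_right]
  · rw [Finset.disjoint_left]
    intro S h1 h3
    simp only [Finset.mem_filter] at h1 h3
    omega

def Mcoef (β α γ : Bool) (δ : ℤ) : ℤ :=
  match β, α, γ with
  | false, false, false => 1
  | false, true, true => -δ
  | true, false, true => 1
  | true, true, false => δ
  | _, _, _ => 0

def lam0 (n : ℕ) (m : {T // T ∈ Fset n} × Bool) (p : Fin n × Bool)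
    (q : {S // S ∈ Eset n} × Bool) : ℤ :=
  if tog p.1 m.1.1 = q.1.1 then
    eps p.1 q.1.1 * Mcoef m.2 p.2 q.2 (if p.1 ∈ m.1.1 then 1 else -1)
  else 0

section Bridge

variable (a : Fin n × Bool → ℝ) (b : {S // S ∈ Eset n} × Bool → ℝ)

noncomputable def zfun : Fin n → ℂ := fun i => (a (i, false) : ℝ) + (a (i, true) : ℝ) * I

noncomputable def wfun : Finset (Fin n) → ℂ := fun S =>
  if h : S ∈ Eset n then (b (⟨S, h⟩, false) : ℝ) + (b (⟨S, h⟩, true) : ℝ) * I else 0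

lemma bridge (Th : {T // T ∈ Fset n}) (β : Bool) :
    (∑ p : Fin n × Bool, ∑ q : {S // S ∈ Eset n} × Bool,
      (lam0 n (Th, β) p q : ℝ) * a p * b q) =
    if β then (cC (zfun a) (wfun b) Th.1).im else (cC (zfun a) (wfun b) Th.1).re := by
  obtain ⟨T, hT⟩ := Th
  have hre : ∀ β' : Bool, (if β' then (cC (zfun a) (wfun b) T).im
      else (cC (zfun a) (wfun b) T).re) =
      ∑ i : Fin n, if tog i T ∈ Eset n then
        (if β' then (trm (zfun a) (wfun b) T i).im else (trm (zfun a) (wfun b) T i).re)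
        else 0 := by
    intro β'
    cases β' <;>
      simp only [cC, Aset, if_true, if_false, Bool.false_eq_true, Complex.re_sum,
        Complex.im_sum, Finset.sum_filter] <;>
      exact Finset.sum_congr rfl fun x _ => by split_ifs <;> simp
  rw [hre, Fintype.sum_prod_type]
  refine Fintype.sum_congr _ _ fun i => ?_
  by_cases hmem : tog i T ∈ Eset n
  · rw [if_pos hmem]
    have hcollapse : ∀ α : Bool, ∑ q : {S // S ∈ Eset n} × Bool,
        (lam0 n (⟨⟨T, hT⟩, β⟩) (i, α) q : ℝ) * a (i, α) * b q =
        ∑ γ : Bool, (eps i (tog i T) * Mcoef β α γ (if i ∈ T then 1 else -1) : ℝ) *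
          a (i, α) * b (⟨⟨tog i T, hmem⟩, γ⟩) := by
      intro α
      rw [Fintype.sum_prod_type]
      rw [Finset.sum_comm]
      refine Fintype.sum_congr _ _ fun γ => ?_
      have : ∀ Sh : {S // S ∈ Eset n},
          (lam0 n (⟨⟨T, hT⟩, β⟩) (i, α) (Sh, γ) : ℝ) * a (i, α) * b (Sh, γ) =
          if (⟨tog i T, hmem⟩ : {S // S ∈ Eset n}) = Sh then
            (eps i (tog i T) * Mcoef β α γ (if i ∈ T then 1 else -1) : ℝ) *
              a (i, α) * b (⟨⟨tog i T, hmem⟩, γ⟩) else 0 := by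
        intro Sh
        by_cases he : (⟨tog i T, hmem⟩ : {S // S ∈ Eset n}) = Sh
        · rw [if_pos he, ← he]
          simp [lam0]
        · rw [if_neg he]
          have hne : ¬ (tog i T = Sh.1) := fun hc => he (Subtype.ext hc)
          simp [lam0, hne]
      rw [Fintype.sum_congr _ _ this, Fintype.sum_ite_eq]
    rw [Fintype.sum_congr _ _ hcollapse]
    -- now a concrete 2x2 computation
    have hw : wfun b (tog i T) =
        (b (⟨⟨tog i T, hmem⟩, false⟩) : ℝ) + (b (⟨⟨tog i T, hmem⟩, true⟩) : ℝ) * I := by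
      simp [wfun, hmem]
    unfold trm
    rw [hw]
    cases β <;> by_cases hiT : i ∈ T <;>
      simp only [hiT, if_true, if_false, ite_true, ite_false, Bool.false_eq_true,
        Fintype.sum_bool, Mcoef, map_add, map_mul, Complex.conj_ofReal, Complex.conj_I,
        zfun, Complex.add_re, Complex.add_im, Complex.mul_re, Complex.mul_im,
        Complex.ofReal_re, Complex.ofReal_im, Complex.I_re, Complex.I_im,
        Complex.intCast_re, Complex.intCast_im, Int.cast_mul, Int.cast_neg, Int.cast_one,
        Complex.neg_re, Complex.neg_im] <;>
      push_cast <;> ring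
  · rw [if_neg hmem]
    have hzero : ∀ α : Bool, ∀ q : {S // S ∈ Eset n} × Bool,
        (lam0 n (⟨⟨T, hT⟩, β⟩) (i, α) q : ℝ) * a (i, α) * b q = 0 := by
      intro α q
      have hne : ¬ (tog i T = q.1.1) := by
        intro hc
        exact hmem (hc ▸ q.1.2)
      simp [lam0, hne]
    exact Finset.sum_eq_zero fun α _ => Finset.sum_eq_zero fun q _ => hzero α q

end Bridge

lemma core (hn1 : 1 ≤ n) (a : Fin n × Bool → ℝ) (b : {S // S ∈ Eset n} × Bool → ℝ) :
    (∑ p, a p ^ 2) * (∑ q, b q ^ 2) =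
      ∑ m : {T // T ∈ Fset n} × Bool,
        (∑ p, ∑ q, (lam0 n m p q : ℝ) * a p * b q) ^ 2 := by
  have hmaster := master (zfun a) (wfun b)
  -- convert master to a real equation
  have hreal : (∑ i, Complex.normSq (zfun a i)) *
      (∑ S ∈ Eset n, Complex.normSq (wfun b S)) =
      ∑ T ∈ Fset n, Complex.normSq (cC (zfun a) (wfun b) T) := by
    have : ((((∑ i, Complex.normSq (zfun a i)) *
        (∑ S ∈ Eset n, Complex.normSq (wfun b S))) : ℝ) : ℂ) =
        ((∑ T ∈ Fset n, Complex.normSq (cC (zfun a) (wfun b) T) : ℝ) : ℂ) := by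
      push_cast
      simpa only [Complex.mul_conj] using hmaster
    exact_mod_cast this
  have hA : (∑ p, a p ^ 2) = ∑ i, Complex.normSq (zfun a i) := by
    rw [Fintype.sum_prod_type]
    refine Fintype.sum_congr _ _ fun i => ?_
    rw [Fintype.sum_bool, zfun, Complex.normSq_add_mul_I]
    ring
  have hB : (∑ q, b q ^ 2) = ∑ S ∈ Eset n, Complex.normSq (wfun b S) := by
    rw [Fintype.sum_prod_type, ← Finset.sum_coe_sort (Eset n)
      (fun S => Complex.normSq (wfun b S))]
    refine Fintype.sum_congr _ _ fun Sh => ?_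
    rw [Fintype.sum_bool]
    have : wfun b Sh.1 = (b (⟨Sh, false⟩) : ℝ) + (b (⟨Sh, true⟩) : ℝ) * Complex.I := by
      simp only [wfun, Sh.2, dif_pos]
    rw [this, Complex.normSq_add_mul_I]
    ring
  have hC : ∑ m : {T // T ∈ Fset n} × Bool,
      (∑ p, ∑ q, (lam0 n m p q : ℝ) * a p * b q) ^ 2 =
      ∑ T ∈ Fset n, Complex.normSq (cC (zfun a) (wfun b) T) := by
    rw [Fintype.sum_prod_type, ← Finset.sum_coe_sort (Fset n)
      (fun T => Complex.normSq (cC (zfun a) (wfun b) T))]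
    refine Fintype.sum_congr _ _ fun Th => ?_
    rw [Fintype.sum_bool, bridge a b Th true, bridge a b Th false]
    simp only [if_true, Bool.false_eq_true, if_false, ite_true, ite_false]
    rw [Complex.normSq_apply]
    ring
  rw [hA, hB, hC, hreal]



/-- For every odd positive integer `n` there is a square identity of size
`[2n, 2^n − 2(n + C(n,3)), 2^n − 2C(n,2) − 2]`. -/
theorem square_identity_odd (n : ℕ) (hn : 0 < n) (hodd : Odd n) :
    IsSquareIdentity (2 * n)
      (2 ^ n - 2 * (n + n.choose 3))
      (2 ^ n - 2 * n.choose 2 - 2) := by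
  have hn1 : 1 ≤ n := hn
  have hmod : n % 2 = 1 := Nat.odd_iff.1 hodd
  have hpow : 2 ^ n = 2 * 2 ^ (n - 1) := by
    conv_lhs => rw [← Nat.sub_add_cancel hn1]
    rw [pow_succ]
    ring
  -- card of Eset
  have hEeq : (Eset n).card + (n + n.choose 3) = 2 ^ (n - 1) := by
    have hsplit := Finset.card_filter_add_card_filter_not
      (s := Finset.univ.filter fun S : Finset (Fin n) => S.card % 2 = 0)
      (fun S => S.card + 5 ≤ n)
    rw [Finset.filter_filter, Finset.filter_filter] at hsplit
    have h1 : (Finset.univ.filter fun S : Finset (Fin n) =>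
        S.card % 2 = 0 ∧ S.card + 5 ≤ n) = Eset n := rfl
    rw [h1, card_big_even hmod, (card_even_odd hn1).1] at hsplit
    omega
  have hFeq : (Fset n).card + (1 + n.choose 2) = 2 ^ (n - 1) := by
    have hsplit := Finset.card_filter_add_card_filter_not
      (s := Finset.univ.filter fun S : Finset (Fin n) => S.card % 2 = 1)
      (fun S => S.card + 4 ≤ n)
    rw [Finset.filter_filter, Finset.filter_filter] at hsplit
    have h1 : (Finset.univ.filter fun S : Finset (Fin n) =>
        S.card % 2 = 1 ∧ S.card + 4 ≤ n) = Fset n := rfl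
    have h2 : (Finset.univ.filter fun S : Finset (Fin n) => S.card % 2 = 1) =
        (Finset.univ.filter fun S : Finset (Fin n) => ¬(S.card % 2 = 0)) := by
      apply Finset.filter_congr
      intro S _
      omega
    rw [h1, card_big_odd hmod, h2, (card_even_odd hn1).2] at hsplit
    omega
  -- equivalences
  have hcardI : Fintype.card (Fin n × Bool) = 2 * n := by
    simp [Fintype.card_prod]
    ring
  have hcardK : Fintype.card ({S // S ∈ Eset n} × Bool) = 2 ^ n - 2 * (n + n.choose 3) := by
    simp only [Fintype.card_prod, Fintype.card_coe, Fintype.card_bool]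
    omega
  have hcardM : Fintype.card ({T // T ∈ Fset n} × Bool) = 2 ^ n - 2 * n.choose 2 - 2 := by
    simp only [Fintype.card_prod, Fintype.card_coe, Fintype.card_bool]
    omega
  set eI : Fin n × Bool ≃ Fin (2 * n) := Fintype.equivFinOfCardEq hcardI
  set eK : {S // S ∈ Eset n} × Bool ≃ Fin (2 ^ n - 2 * (n + n.choose 3)) :=
    Fintype.equivFinOfCardEq hcardK
  set eM : {T // T ∈ Fset n} × Bool ≃ Fin (2 ^ n - 2 * n.choose 2 - 2) :=
    Fintype.equivFinOfCardEq hcardM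
  refine ⟨fun m i j => lam0 n (eM.symm m) (eI.symm i) (eK.symm j), fun a b => ?_⟩
  have hcore := core hn1 (fun p => a (eI p)) (fun q => b (eK q))
  have hA : ∑ p : Fin n × Bool, a (eI p) ^ 2 = ∑ i, a i ^ 2 :=
    Fintype.sum_equiv eI _ _ (fun p => rfl)
  have hB : ∑ q : {S // S ∈ Eset n} × Bool, b (eK q) ^ 2 = ∑ j, b j ^ 2 :=
    Fintype.sum_equiv eK _ _ (fun q => rfl)
  have hC : ∑ m' : {T // T ∈ Fset n} × Bool,
      (∑ p, ∑ q, (lam0 n m' p q : ℝ) * a (eI p) * b (eK q)) ^ 2 =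
      ∑ m, (∑ i, ∑ j, (lam0 n (eM.symm m) (eI.symm i) (eK.symm j) : ℝ) * a i * b j) ^ 2 := by
    refine Fintype.sum_equiv eM _ _ fun m' => ?_
    congr 1
    refine Fintype.sum_equiv eI _ _ fun p => ?_
    refine Fintype.sum_equiv eK _ _ fun q => ?_
    simp
  rw [hA, hB, hC] at hcore
  exact hcore
end
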